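/- arXiv:1509.05957 — 4 statements merged into one kernel-verified Lean document; each statement's English description precedes it below -/
import Mathlib

section
/- Let A ∈ ℤ^{n×m}, a ∈ ℤ^n, C ∈ ℕ^{k×m}, c ∈ ℕ^k, and let β bound the absolute values of all entries of A, a, C, c. Then the set L = {Cz + c : z ∈ ℕ^m, Az = a} ⊆ ℕ^k is semilinear, and if L is nonempty then L contains a vector all of whose entries are at most β + n!·m·(m+1)·β^{n+1}. -/
/-!
Semilinearity is Dickson's lemma: the `≤`-minimal solutions of `A z = a` and the minimal nonzero
solutions of `A z = 0` form finite sets, and every solution is a minimal one plus an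
`ℕ`-combination of minimal homogeneous ones.

For the small solution, homogenize: `(z₀, 1)` lies in the cone `{(z, s) ≥ 0 | A z = s • a}`. A
minimal dependent set of columns of `[A | -a]` has a kernel vector whose entries are `s × s` minors
with `s ≤ n`, hence at most `n! β^n`. If it has entries of both signs, moving along it to the
boundary of the orthant shrinks the support; otherwise it is a ray of the cone. Subtracting the
largest feasible multiple of a ray shrinks the support too, so `(z₀, 1)` is a nonnegative
combination of at most `m + 1` such rays. Rounding down the coefficients of the rays with last
coordinate `0` keeps an integer solution; the remaining rays have total weight at most `1`, so
every entry is at most `(m + 1) n! β^n`.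
-/

/-- A subset of ℕ^k is semilinear if it is a finite union of linear sets. -/
def IsSemilinear {k : ℕ} (L : Set (Fin k → ℕ)) : Prop :=
  ∃ (r : ℕ) (base : Fin r → Fin k → ℕ) (num : Fin r → ℕ)
    (per : (i : Fin r) → Fin (num i) → Fin k → ℕ),
    L = {v | ∃ (i : Fin r) (x : Fin (num i) → ℕ), v = base i + ∑ j, x j • per i j}

open Matrix Finset
open scoped Nat

theorem AddSubmonoid.eq_closure_setOf_minimal {ι : Type*} [Finite ι] (M : AddSubmonoid (ι → ℕ))
    (hM : ∀ x ∈ M, ∀ y ∈ M, y ≤ x → x - y ∈ M) :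
    M = closure {x | Minimal (fun y => y ∈ M ∧ y ≠ 0) x} := by
  refine le_antisymm (fun x hx => ?_) (closure_le.mpr fun _ hx => hx.1.1)
  induction x using WellFoundedLT.induction with
  | ind x ih =>
  rcases eq_or_ne x 0 with rfl | hx0
  · exact zero_mem _
  obtain ⟨y, hyx, hy⟩ := exists_minimal_le_of_wellFoundedLT (fun y => y ∈ M ∧ y ≠ 0) x ⟨hx, hx0⟩
  have hxy := add_tsub_cancel_of_le hyx
  have hlt : x - y < x := tsub_le_self.lt_of_ne fun h => hy.1.2 <| by
    rw [h] at hxy; simpa using hxy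
  rw [← hxy]
  exact add_mem (subset_closure hy) (ih _ hlt (hM x hx y hy.1.1 hyx))

theorem Set.finite_setOf_minimal {α : Type*} [PartialOrder α] [WellQuasiOrderedLE α]
    (P : α → Prop) : {x | Minimal P x}.Finite :=
  WellQuasiOrderedLE.finite_of_isAntichain (setOfPred_minimal_antichain P)

theorem isSemilinear_add_closure {k : ℕ} {B P : Set (Fin k → ℕ)} (hB : B.Finite)
    (hP : P.Finite) :
    IsSemilinear {v | ∃ b ∈ B, ∃ p ∈ AddSubmonoid.closure P, v = b + p} := by
  obtain ⟨r, base, rfl⟩ := hB.fin_embedding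
  obtain ⟨s, per, rfl⟩ := hP.fin_embedding
  refine ⟨r, base, fun _ => s, fun _ => per, ?_⟩
  simp [AddSubmonoid.mem_closure_range_iff_of_fintype]

section NatSolutions

variable {κ ι : Type*} [Fintype ι] (A : Matrix κ ι ℤ)

theorem mulVec_natCast_add (x y : ι → ℕ) :
    A *ᵥ (fun j => ((x + y) j : ℤ)) = A *ᵥ (fun j => (x j : ℤ)) + A *ᵥ (fun j => (y j : ℤ)) := by
  rw [← mulVec_add]; rfl

theorem mulVec_natCast_sub {x y : ι → ℕ} (h : y ≤ x) :
    A *ᵥ (fun j => ((x - y) j : ℤ)) = A *ᵥ (fun j => (x j : ℤ)) - A *ᵥ (fun j => (y j : ℤ)) := by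
  rw [← mulVec_sub]; congr 1; ext j; simp [h j]

def natKer : AddSubmonoid (ι → ℕ) where
  carrier := {z | A *ᵥ (fun j => (z j : ℤ)) = 0}
  zero_mem' := mulVec_zero A
  add_mem' {x y} hx hy := by
    simp only [Set.mem_ofPred_eq, mulVec_natCast_add] at *
    rw [hx, hy, add_zero]

theorem natKer_eq_closure :
    natKer A = AddSubmonoid.closure {x | Minimal (fun y => y ∈ natKer A ∧ y ≠ 0) x} :=
  AddSubmonoid.eq_closure_setOf_minimal _ fun x hx y hy hyx => by
    change A *ᵥ _ = 0
    rw [mulVec_natCast_sub A hyx, hx, hy, sub_zero]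

theorem isSemilinear_image_natSolutions {k : ℕ} (a : κ → ℤ) (C : Matrix (Fin k) ι ℕ)
    (c : Fin k → ℕ) :
    IsSemilinear {v | ∃ z : ι → ℕ, A *ᵥ (fun j => (z j : ℤ)) = a ∧ v = C *ᵥ z + c} := by
  set sol := {z : ι → ℕ | A *ᵥ (fun j => (z j : ℤ)) = a}
  set hom := {x | Minimal (fun y => y ∈ natKer A ∧ y ≠ 0) x}
  have hmap : AddSubmonoid.closure (C.mulVec '' hom) = (natKer A).map C.mulVecLin := by
    rw [natKer_eq_closure, AddMonoidHom.map_mclosure, coe_mulVecLin]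
  convert isSemilinear_add_closure ((Set.finite_setOf_minimal (· ∈ sol)).image
    (fun z => C *ᵥ z + c)) ((Set.finite_setOf_minimal (fun y => y ∈ natKer A ∧ y ≠ 0)).image
    C.mulVec) using 1
  rw [hmap]
  ext v
  constructor
  · rintro ⟨z, hz, rfl⟩
    obtain ⟨b, hbz, hb⟩ := exists_minimal_le_of_wellFoundedLT (· ∈ sol) z hz
    refine ⟨_, ⟨b, hb, rfl⟩, C *ᵥ (z - b), ⟨z - b, ?_, rfl⟩, ?_⟩
    · change A *ᵥ _ = 0
      rw [mulVec_natCast_sub A hbz, hz, hb.1, sub_self]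
    · rw [add_right_comm, ← mulVec_add, add_tsub_cancel_of_le hbz]
  · rintro ⟨_, ⟨b, hb, rfl⟩, _, ⟨h, hh, rfl⟩, rfl⟩
    refine ⟨b + h, ?_, by rw [mulVec_add, add_right_comm]; rfl⟩
    rw [mulVec_natCast_add, hb.1, hh, add_zero]

end NatSolutions

theorem Matrix.exists_submatrix_det_ne_zero {K κ : Type*} [Field K] [Fintype κ] {s : ℕ}
    (M : Matrix κ (Fin s) K) (h : LinearIndependent K M.col) :
    ∃ r : Fin s → κ, (M.submatrix r id).det ≠ 0 := by
  have hspan : Submodule.span K (Set.range M.row) = ⊤ := by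
    apply Submodule.eq_top_of_finrank_eq
    rw [← M.rank_eq_finrank_span_row, ← rank_transpose, LinearIndependent.rank_matrix h]
    simp
  obtain ⟨κ', a, -, hsp, hli⟩ := exists_linearIndependent' K M.row
  let b := Module.Basis.mk hli (by rw [hsp, hspan])
  let e := b.indexEquiv (Pi.basisFun K (Fin s))
  refine ⟨a ∘ e.symm, fun hdet => ?_⟩
  have : LinearIndependent K (M.submatrix (a ∘ e.symm) id).row := hli.comp _ e.symm.injective
  exact (isUnit_iff_isUnit_det _).mp (linearIndependent_rows_iff_isUnit.mp this) |>.ne_zero hdet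

theorem Matrix.not_linearIndependent_col_iff {K κ ι : Type*} [Field K] [Fintype ι]
    {M : Matrix κ ι K} : ¬ LinearIndependent K M.col ↔ ∃ c ≠ 0, M *ᵥ c = 0 := by
  rw [← mulVec_injective_iff, ← coe_mulVecLin, injective_iff_map_eq_zero]
  push Not
  simp only [coe_mulVecLin, and_comm]

def crossVec {R : Type*} [CommRing R] {s : ℕ} (N : Matrix (Fin s) (Fin (s + 1)) R) :
    Fin (s + 1) → R :=
  fun q => (-1) ^ (q : ℕ) * (N.submatrix id q.succAbove).det

theorem dotProduct_crossVec {R : Type*} [CommRing R] {s : ℕ} (N : Matrix (Fin s) (Fin (s + 1)) R)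
    (w : Fin (s + 1) → R) : w ⬝ᵥ crossVec N = (of (Fin.cons w N)).det := by
  rw [det_succ_row_zero, dotProduct]
  refine Finset.sum_congr rfl fun q _ => ?_
  rw [crossVec, mul_left_comm, ← mul_assoc]
  rfl

theorem det_map_intCast {κ : Type*} [Fintype κ] [DecidableEq κ] (M : Matrix κ κ ℤ) :
    (M.map (Int.cast : ℤ → ℚ)).det = M.det :=
  ((Int.castRingHom ℚ).map_det M).symm

theorem exists_small_kernel_vec_of_circuit {κ : Type*} [Fintype κ] {s β : ℕ} (hβ : 1 ≤ β)
    (M : Matrix κ (Fin (s + 1)) ℤ) (hM : ∀ i q, |M i q| ≤ β)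
    (hdep : ¬ LinearIndependent ℚ (M.map (Int.cast : ℤ → ℚ)).col)
    (hind : LinearIndependent ℚ ((M.map (Int.cast : ℤ → ℚ)).submatrix id Fin.succ).col) :
    ∃ u : Fin (s + 1) → ℤ, u ≠ 0 ∧ M *ᵥ u = 0 ∧
      ∀ q, |u q| ≤ (Fintype.card κ)! * β ^ Fintype.card κ := by
  have hs : s ≤ Fintype.card κ := by
    simpa using hind.fintype_card_le_finrank
  obtain ⟨r, hr⟩ := exists_submatrix_det_ne_zero _ hind
  obtain ⟨c, hc, hMc⟩ := not_linearIndependent_col_iff.mp hdep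
  refine ⟨crossVec (M.submatrix r id), fun h => hr ?_, funext fun i => ?_, fun q => ?_⟩
  · have := congrFun h 0
    simp only [crossVec, Fin.succAbove_zero, Fin.val_zero, pow_zero, one_mul, Pi.zero_apply] at this
    simpa [← det_map_intCast, submatrix_map] using congrArg (Int.cast : ℤ → ℚ) this
  -- `M i ⬝ᵥ u` is the minor on the rows `i, r 0, …, r (s - 1)`, whose columns satisfy `c`
  · have hQ : of (Fin.cons (M i) (M.submatrix r id)) = M.submatrix (Fin.cons i r) id := by
      ext p q; exact Fin.cases rfl (fun _ => rfl) p
    have hQc : (M.submatrix (Fin.cons i r) id).map (Int.cast : ℤ → ℚ) *ᵥ c = 0 :=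
      funext fun p => congrFun hMc ((Fin.cons i r : Fin (s + 1) → κ) p)
    have := exists_mulVec_eq_zero_iff.mp ⟨c, hc, hQc⟩
    rw [det_map_intCast, Int.cast_eq_zero] at this
    rw [mulVec, dotProduct_crossVec, hQ, this, Pi.zero_apply]
  · calc |crossVec (M.submatrix r id) q| = |(M.submatrix r q.succAbove).det| := by
          simp [crossVec, abs_mul]
      _ ≤ s ! * β ^ s := by
          simpa using det_le (A := M.submatrix r q.succAbove) (abv := AbsoluteValue.abs)
            fun p p' => hM (r p) (q.succAbove p')
      _ ≤ (Fintype.card κ)! * β ^ Fintype.card κ := by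
          gcongr
          exact_mod_cast hβ

theorem Matrix.submatrix_id_mulVec_of_injective {R κ ι α : Type*} [NonUnitalNonAssocSemiring R]
    [Fintype ι] [Fintype α] (B : Matrix κ ι R) {g : α → ι} (hg : g.Injective) (c : α → R) :
    B.submatrix id g *ᵥ c = B *ᵥ Function.extend g c 0 :=
  funext fun _ => Fintype.sum_of_injective g hg _ _
    (fun j hj => by rw [Function.extend_apply' _ _ _ (by simpa using hj)]; simp)
    (fun q => by rw [hg.extend_apply]; rfl)

theorem exists_circuit_of_mulVec_eq_zero {K κ ι : Type*} [Field K] [Fintype ι]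
    (B : Matrix κ ι K) {x : ι → K} (hx : x ≠ 0) (hBx : B *ᵥ x = 0) :
    ∃ (s : ℕ) (g : Fin (s + 1) → ι), g.Injective ∧ (∀ q, x (g q) ≠ 0) ∧
      ¬ LinearIndependent K (B.submatrix id g).col ∧
      LinearIndependent K (B.submatrix id (g ∘ Fin.succ)).col := by
  classical
  let P : ℕ → Prop := fun s => ∃ g : Fin s → ι, g.Injective ∧ (∀ q, x (g q) ≠ 0) ∧
    ¬ LinearIndependent K (B.submatrix id g).col
  have hP : ∃ s, P s := by
    let T := Finset.univ.filter (x · ≠ 0)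
    let g : Fin T.card → ι := fun q => T.equivFin.symm q
    have hg : g.Injective := Subtype.val_injective.comp T.equivFin.symm.injective
    have hxg : Function.extend g (x ∘ g) 0 = x := by
      ext j
      by_cases hj : ∃ q, g q = j
      · obtain ⟨q, rfl⟩ := hj
        exact hg.extend_apply _ _ _
      · rw [Function.extend_apply' _ _ _ hj]
        by_contra h
        exact hj ⟨T.equivFin ⟨j, by simpa [T, eq_comm] using h⟩, by simp [g]⟩
    refine ⟨T.card, g, hg, fun q => (Finset.mem_filter.mp (T.equivFin.symm q).2).2,
      not_linearIndependent_col_iff.mpr ⟨x ∘ g, fun h => hx ?_, ?_⟩⟩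
    · rw [← hxg, h, Function.extend_zero]
    · rw [submatrix_id_mulVec_of_injective _ hg, hxg, hBx]
  obtain ⟨s, hs⟩ : ∃ s, Nat.find hP = s + 1 := Nat.exists_eq_succ_of_ne_zero fun h => by
    obtain ⟨g, -, -, hdep⟩ := h ▸ Nat.find_spec hP
    exact hdep linearIndependent_empty_type
  obtain ⟨g, hg, hgx, hdep⟩ := hs ▸ Nat.find_spec hP
  refine ⟨s, g, hg, hgx, hdep, by_contra fun h => ?_⟩
  have := Nat.find_min' hP ⟨g ∘ Fin.succ, hg.comp (Fin.succ_injective _), fun q => hgx _, h⟩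
  omega

theorem exists_small_int_kernel_vec {κ ι : Type*} [Fintype κ] [Fintype ι] {β : ℕ} (hβ : 1 ≤ β)
    (B : Matrix κ ι ℤ) (hB : ∀ i j, |B i j| ≤ β) {x : ι → ℚ} (hx : x ≠ 0)
    (hBx : B.map (Int.cast : ℤ → ℚ) *ᵥ x = 0) :
    ∃ u : ι → ℤ, (∃ j, 0 < u j) ∧ B *ᵥ u = 0 ∧ (∀ j, x j = 0 → u j = 0) ∧
      ∀ j, |u j| ≤ (Fintype.card κ)! * β ^ Fintype.card κ := by
  suffices ∃ u : ι → ℤ, u ≠ 0 ∧ B *ᵥ u = 0 ∧ (∀ j, x j = 0 → u j = 0) ∧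
      ∀ j, |u j| ≤ (Fintype.card κ)! * β ^ Fintype.card κ by
    obtain ⟨u, hu0, hBu, hsupp, hbd⟩ := this
    obtain ⟨j, hj⟩ := Function.ne_iff.mp hu0
    rcases (hj : u j ≠ 0).lt_or_gt with hneg | hpos
    · exact ⟨-u, ⟨j, by simpa using hneg⟩, by rw [mulVec_neg, hBu, neg_zero],
        fun j hj => by simp [hsupp j hj], fun j => by simpa using hbd j⟩
    · exact ⟨u, ⟨j, hpos⟩, hBu, hsupp, hbd⟩
  obtain ⟨s, g, hg, hgx, hdep, hind⟩ := exists_circuit_of_mulVec_eq_zero _ hx hBx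
  obtain ⟨u, hu0, hMu, hbd⟩ := exists_small_kernel_vec_of_circuit hβ (B.submatrix id g)
    (fun i q => hB i (g q)) hdep hind
  refine ⟨Function.extend g u 0, fun h => hu0 (funext fun q => ?_), ?_, fun j hj => ?_, fun j => ?_⟩
  · simpa [hg.extend_apply] using congrFun h (g q)
  · rw [← submatrix_id_mulVec_of_injective _ hg, hMu]
  all_goals by_cases hj' : ∃ q, g q = j
  · obtain ⟨q, rfl⟩ := hj'
    exact absurd hj (hgx q)
  · rw [Function.extend_apply' _ _ _ hj', Pi.zero_apply]
  · obtain ⟨q, rfl⟩ := hj'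
    rw [hg.extend_apply]
    exact hbd q
  · rw [Function.extend_apply' _ _ _ hj', Pi.zero_apply, abs_zero]
    positivity

theorem exists_sub_smul_nonneg {ι K : Type*} [Fintype ι] [Field K] [LinearOrder K]
    [IsStrictOrderedRing K] {x v : ι → K} (hx : 0 ≤ x) (hv : ∃ j, 0 < v j) :
    ∃ t, 0 ≤ t ∧ 0 ≤ x - t • v ∧ ∃ j, 0 < v j ∧ x j = t * v j := by
  obtain ⟨j, hj, hmin⟩ := exists_min_image {j | 0 < v j} (fun j => x j / v j)
    (hv.imp fun j hj => by simpa using hj)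
  rw [mem_filter_univ] at hj
  refine ⟨x j / v j, div_nonneg (hx j) hj.le, fun i => ?_, j, hj, (div_mul_cancel₀ _ hj.ne').symm⟩
  rw [Pi.zero_apply, Pi.sub_apply, Pi.smul_apply, smul_eq_mul, sub_nonneg]
  rcases le_or_gt (v i) 0 with hvi | hvi
  · exact (mul_nonpos_of_nonneg_of_nonpos (div_nonneg (hx j) hj.le) hvi).trans (hx i)
  · exact (le_div_iff₀ hvi).mp (hmin i (by simpa using hvi))

theorem card_support_lt {ι M : Type*} [Fintype ι] [Zero M] [DecidableEq M] {x y : ι → M}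
    (hsupp : ∀ j, x j = 0 → y j = 0) {j : ι} (hxj : x j ≠ 0) (hyj : y j = 0) :
    #{j | y j ≠ 0} < #{j | x j ≠ 0} :=
  card_lt_card <| (ssubset_iff_of_subset fun i => by simpa using mt (hsupp i)).mpr
    ⟨j, by simpa using hxj, by simpa using hyj⟩

theorem map_intCast_mulVec {κ ι : Type*} [Fintype ι] (B : Matrix κ ι ℤ) (u : ι → ℤ) :
    B.map (Int.cast : ℤ → ℚ) *ᵥ (fun j => (u j : ℚ)) = fun i => ((B *ᵥ u) i : ℚ) :=
  funext fun i => ((Int.castRingHom ℚ).map_mulVec B u i).symm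

def IsSmallRay {κ ι : Type*} [Fintype ι] (B : Matrix κ ι ℤ) (Δ : ℤ) (d : ι → ℤ) : Prop :=
  0 ≤ d ∧ B *ᵥ d = 0 ∧ ∀ j, d j ≤ Δ

section Rays

variable {κ ι : Type*} [Fintype κ] [Fintype ι] {β : ℕ} (hβ : 1 ≤ β) (B : Matrix κ ι ℤ)
  (hB : ∀ i j, |B i j| ≤ β)
include hβ hB

theorem exists_small_ray {x : ι → ℚ} (hx0 : 0 ≤ x) (hx : x ≠ 0)
    (hBx : B.map (Int.cast : ℤ → ℚ) *ᵥ x = 0) :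
    ∃ d : ι → ℤ, IsSmallRay B ((Fintype.card κ)! * β ^ Fintype.card κ) d ∧ (∃ j, 0 < d j) ∧
      ∀ j, x j = 0 → d j = 0 := by
  induction hN : #{j | x j ≠ 0} using Nat.strong_induction_on generalizing x with
  | _ N ih =>
  obtain ⟨u, hupos, hBu, husupp, hubd⟩ := exists_small_int_kernel_vec hβ B hB hx hBx
  by_cases hneg : ∃ j, u j < 0
  · obtain ⟨j₁, hj₁⟩ := hneg
    obtain ⟨t, ht, hx', j₀, hj₀, hxj₀⟩ := exists_sub_smul_nonneg (v := fun j => (u j : ℚ)) hx0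
      (by simpa using hupos)
    have hsupp : ∀ j, x j = 0 → (x - t • fun j => (u j : ℚ)) j = 0 := fun j hj => by
      simp [hj, husupp j hj]
    have hx'0 : x - t • (fun j => (u j : ℚ)) ≠ 0 := fun h => by
      have hxj₁ : 0 < x j₁ := (hx0 j₁).lt_of_ne' fun h => hj₁.ne (husupp j₁ h)
      have := congrFun h j₁
      simp only [Pi.sub_apply, Pi.smul_apply, smul_eq_mul, Pi.zero_apply] at this
      linarith [mul_nonpos_of_nonneg_of_nonpos ht (Int.cast_nonpos.mpr hj₁.le : (u j₁ : ℚ) ≤ 0)]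
    have hBx' : B.map (Int.cast : ℤ → ℚ) *ᵥ (x - t • fun j => (u j : ℚ)) = 0 := by
      rw [mulVec_sub, mulVec_smul, hBx, map_intCast_mulVec, hBu]
      ext; simp
    obtain ⟨d, hd, hdpos, hdsupp⟩ := ih _ (hN ▸ card_support_lt hsupp
      (j := j₀) (fun h => hj₀.ne' (by exact_mod_cast husupp j₀ h)) (by simp [hxj₀])) hx'
      hx'0 hBx' rfl
    exact ⟨d, hd, hdpos, fun j hj => hdsupp j (hsupp j hj)⟩
  · push Not at hneg
    exact ⟨u, ⟨hneg, hBu, fun j => (le_abs_self _).trans (hubd j)⟩, hupos, husupp⟩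

theorem exists_sum_small_rays {x : ι → ℚ} (hx0 : 0 ≤ x)
    (hBx : B.map (Int.cast : ℤ → ℚ) *ᵥ x = 0) :
    ∃ (p : ℕ) (d : Fin p → ι → ℤ) (μ : Fin p → ℚ), p ≤ #{j | x j ≠ 0} ∧
      (∀ i, IsSmallRay B ((Fintype.card κ)! * β ^ Fintype.card κ) (d i)) ∧ 0 ≤ μ ∧
      x = ∑ i, μ i • fun j => (d i j : ℚ) := by
  induction hN : #{j | x j ≠ 0} using Nat.strong_induction_on generalizing x with
  | _ N ih =>
  rcases eq_or_ne x 0 with rfl | hx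
  · exact ⟨0, Fin.elim0, Fin.elim0, Nat.zero_le _, fun i => i.elim0, fun i => i.elim0, by simp⟩
  obtain ⟨d, hd, hdpos, hdsupp⟩ := exists_small_ray hβ B hB hx0 hx hBx
  obtain ⟨t, ht, hx', j₀, hj₀, hxj₀⟩ := exists_sub_smul_nonneg (v := fun j => (d j : ℚ)) hx0
    (by simpa using hdpos)
  have hsupp : ∀ j, x j = 0 → (x - t • fun j => (d j : ℚ)) j = 0 := fun j hj => by
    simp [hj, hdsupp j hj]
  have hlt := card_support_lt hsupp (j := j₀)
    (fun h => hj₀.ne' (by exact_mod_cast hdsupp j₀ h)) (by simp [hxj₀])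
  have hBx' : B.map (Int.cast : ℤ → ℚ) *ᵥ (x - t • fun j => (d j : ℚ)) = 0 := by
    rw [mulVec_sub, mulVec_smul, hBx, map_intCast_mulVec, hd.2.1]
    ext; simp
  obtain ⟨p, d', μ, hp, hd', hμ, hx'dec⟩ := ih _ (hN ▸ hlt) hx' hBx' rfl
  refine ⟨p + 1, Fin.snoc d' d, Fin.snoc μ t, by omega,
    fun i => Fin.lastCases (by simpa using hd) (fun i => by simpa using hd' i) i,
    fun i => Fin.lastCases (by simpa using ht) (fun i => by simpa using hμ i) i, ?_⟩
  rw [Fin.sum_univ_castSucc]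
  simp only [Fin.snoc_castSucc, Fin.snoc_last, ← hx'dec, sub_add_cancel]

end Rays

/-- `[A | -a]`, the column `-a` indexed by `none`: its kernel is `{(z, s) | A z = s • a}`. -/
def homogenization {R κ ι : Type*} [Neg R] (A : Matrix κ ι R) (a : κ → R) :
    Matrix κ (Option ι) R :=
  of fun i o => o.elim (-a i) (A i)

theorem homogenization_mulVec {R κ ι : Type*} [CommRing R] [Fintype ι] (A : Matrix κ ι R)
    (a : κ → R) (v : Option ι → R) :
    homogenization A a *ᵥ v = A *ᵥ (fun j => v (some j)) - v none • a := by
  ext i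
  simp [homogenization, mulVec, dotProduct, Fintype.sum_option]
  ring

theorem rounding_residual_bounds {μ : ℚ} {s y Δ : ℤ} (hμ : 0 ≤ μ) (hs : 0 ≤ s) (hy : 0 ≤ y)
    (hyΔ : y ≤ Δ) :
    0 ≤ (μ - ((if s = 0 then ⌊μ⌋ else 0 : ℤ) : ℚ)) * y ∧
      (μ - ((if s = 0 then ⌊μ⌋ else 0 : ℤ) : ℚ)) * y ≤ Δ * ((if s = 0 then 1 else 0) + μ * s) := by
  have hy0 : (0 : ℚ) ≤ y := by exact_mod_cast hy
  have hyΔ : (y : ℚ) ≤ Δ := by exact_mod_cast hyΔ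
  by_cases h : s = 0
  · simp only [h, if_true, Int.self_sub_floor, Int.cast_zero, mul_zero, add_zero, mul_one]
    exact ⟨mul_nonneg (Int.fract_nonneg _) hy0,
      (mul_le_of_le_one_left hy0 (Int.fract_lt_one _).le).trans hyΔ⟩
  · have hs : (1 : ℚ) ≤ s := by exact_mod_cast hs.lt_of_ne' h
    simp only [h, if_false, Int.cast_zero, sub_zero, zero_add]
    refine ⟨mul_nonneg hμ hy0, ?_⟩
    calc μ * y ≤ μ * Δ := by gcongr
      _ ≤ μ * Δ * s := le_mul_of_one_le_right (mul_nonneg hμ (hy0.trans hyΔ)) hs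
      _ = Δ * (μ * s) := by ring

theorem exists_small_natSolution_of_sum_rays {κ ι : Type*} [Fintype ι] (A : Matrix κ ι ℤ)
    (a : κ → ℤ) {z₀ : ι → ℕ} (hz₀ : A *ᵥ (fun j => (z₀ j : ℤ)) = a) {Δ : ℤ} {p : ℕ}
    (d : Fin p → Option ι → ℤ) (μ : Fin p → ℚ) (hd : ∀ i, IsSmallRay (homogenization A a) Δ (d i))
    (hμ : 0 ≤ μ)
    (hdec : (fun o => o.elim 1 fun j => (z₀ j : ℚ)) = ∑ i, μ i • fun o => (d i o : ℚ)) :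
    ∃ z : ι → ℕ, A *ᵥ (fun j => (z j : ℤ)) = a ∧ ∀ j, (z j : ℤ) ≤ p * Δ := by
  have hy (i) : A *ᵥ (fun j => d i (some j)) = d i none • a := by
    rw [← sub_eq_zero, ← homogenization_mulVec, (hd i).2.1]
  have hμs : ∑ i, μ i * d i none = 1 := by
    simpa using (congrFun hdec none).symm
  have hz₀dec (j) : (z₀ j : ℚ) = ∑ i, μ i * d i (some j) := by
    simpa using congrFun hdec (some j)
  -- only the rays with vanishing last coordinate lie in the kernel of `A`; those are rounded down
  let k (i : Fin p) : ℤ := if d i none = 0 then ⌊μ i⌋ else 0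
  have hks (i) : k i * d i none = 0 := by
    by_cases h : d i none = 0 <;> simp [k, h]
  let z : ι → ℤ := (fun j => (z₀ j : ℤ)) - ∑ i, k i • fun j => d i (some j)
  have hAz : A *ᵥ z = a := by
    simp only [z, mulVec_sub, mulVec_sum, mulVec_smul, hy, smul_smul, hks, zero_smul,
      sum_const_zero, sub_zero, hz₀]
  have hzq (j) : (z j : ℚ) = ∑ i, (μ i - k i) * d i (some j) := by
    simp [z, hz₀dec, sub_mul, Finset.sum_apply]
  have hterm (i j) := rounding_residual_bounds (hμ i) ((hd i).1 none) ((hd i).1 (some j))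
    ((hd i).2.2 (some j))
  obtain ⟨i₀, -, hi₀⟩ := exists_ne_zero_of_sum_ne_zero (hμs ▸ one_ne_zero)
  have hcount : #{i | d i none = 0} + 1 ≤ p := by
    have hs₀ : d i₀ none ≠ 0 := by exact_mod_cast right_ne_zero_of_mul hi₀
    simpa using card_lt_card (filter_ssubset.mpr ⟨i₀, mem_univ _, hs₀⟩)
  have hΔ : (0 : ℚ) ≤ Δ := by exact_mod_cast ((hd i₀).1 none).trans ((hd i₀).2.2 none)
  have hz0 (j) : 0 ≤ z j := by
    have : (0 : ℚ) ≤ z j := hzq j ▸ sum_nonneg fun i _ => (hterm i j).1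
    exact_mod_cast this
  have hzΔ (j) : (z j : ℚ) ≤ p * Δ :=
    calc (z j : ℚ) ≤ ∑ i, Δ * ((if d i none = 0 then 1 else 0) + μ i * d i none) :=
          hzq j ▸ sum_le_sum fun i _ => (hterm i j).2
      _ = Δ * (#{i | d i none = 0} + 1) := by rw [← mul_sum, sum_add_distrib, hμs, sum_boole]
      _ ≤ p * Δ := by rw [mul_comm]; gcongr; exact_mod_cast hcount
  refine ⟨fun j => (z j).toNat, ?_, fun j => ?_⟩
  · convert hAz
    exact Int.toNat_of_nonneg (hz0 _)
  · rw [Int.toNat_of_nonneg (hz0 j)]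
    exact_mod_cast hzΔ j

theorem exists_small_natSolution {κ ι : Type*} [Fintype κ] [Fintype ι] {β : ℕ} (hβ : 1 ≤ β)
    (A : Matrix κ ι ℤ) (a : κ → ℤ) (hA : ∀ i j, |A i j| ≤ β) (ha : ∀ i, |a i| ≤ β)
    {z₀ : ι → ℕ} (hz₀ : A *ᵥ (fun j => (z₀ j : ℤ)) = a) :
    ∃ z : ι → ℕ, A *ᵥ (fun j => (z j : ℤ)) = a ∧
      ∀ j, z j ≤ (Fintype.card ι + 1) * ((Fintype.card κ)! * β ^ Fintype.card κ) := by
  have hB (i) : ∀ o, |homogenization A a i o| ≤ β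
    | none => by simpa [homogenization] using ha i
    | some j => hA i j
  have hBx : (homogenization A a).map (Int.cast : ℤ → ℚ) *ᵥ
      (fun o => o.elim 1 fun j => (z₀ j : ℚ)) = 0 := by
    ext i
    have := congrArg (Int.cast : ℤ → ℚ) (congrFun hz₀ i)
    simp [homogenization, mulVec, dotProduct, Fintype.sum_option] at this ⊢
    linarith
  obtain ⟨p, d, μ, hp, hd, hμ, hdec⟩ := exists_sum_small_rays hβ _ hB
    (fun o => by cases o <;> simp) hBx
  obtain ⟨z, hz, hzΔ⟩ := exists_small_natSolution_of_sum_rays A a hz₀ d μ hd hμ hdec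
  refine ⟨z, hz, fun j => ?_⟩
  have hp' : p ≤ Fintype.card ι + 1 := hp.trans ((card_le_univ _).trans_eq (Fintype.card_option))
  have := (hzΔ j).trans (mul_le_mul_of_nonneg_right (Int.ofNat_le.mpr hp') (by positivity))
  exact_mod_cast this

theorem mulVec_add_apply_le {k ι : Type*} [Fintype ι] {C : Matrix k ι ℕ} {c : k → ℕ}
    {z : ι → ℕ} {β Z : ℕ} (hC : ∀ i j, C i j ≤ β) (hc : ∀ i, c i ≤ β) (hz : ∀ j, z j ≤ Z)
    (i : k) : (C *ᵥ z + c) i ≤ β + Fintype.card ι * β * Z :=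
  calc (C *ᵥ z + c) i = ∑ j, C i j * z j + c i := rfl
    _ ≤ ∑ _j : ι, β * Z + β := by gcongr with j; exacts [hC i j, hz j, hc i]
    _ = β + Fintype.card ι * β * Z := by simp [mul_assoc, add_comm]

/-- Images of solution sets of linear Diophantine systems are semilinear and,
if nonempty, contain a small vector. -/
theorem diophantine_semilinear_small_solution (n m k : ℕ)
    (A : Matrix (Fin n) (Fin m) ℤ) (a : Fin n → ℤ)
    (C : Matrix (Fin k) (Fin m) ℕ) (c : Fin k → ℕ) (β : ℕ)
    (hA : ∀ i j, (A i j).natAbs ≤ β) (ha : ∀ i, (a i).natAbs ≤ β)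
    (hC : ∀ i j, C i j ≤ β) (hc : ∀ i, c i ≤ β) :
    IsSemilinear {v : Fin k → ℕ | ∃ z : Fin m → ℕ,
        A.mulVec (fun j => (z j : ℤ)) = a ∧ v = C.mulVec z + c} ∧
    ((∃ z : Fin m → ℕ, A.mulVec (fun j => (z j : ℤ)) = a) →
      ∃ z : Fin m → ℕ, A.mulVec (fun j => (z j : ℤ)) = a ∧
        ∀ i, (C.mulVec z + c) i ≤ β + n.factorial * m * (m + 1) * β ^ (n + 1)) := by
  refine ⟨isSemilinear_image_natSolutions A a C c, fun ⟨z₀, hz₀⟩ => ?_⟩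
  rcases Nat.eq_zero_or_pos β with rfl | hβ
  · refine ⟨z₀, hz₀, fun i => ?_⟩
    simp [mulVec, dotProduct, Nat.le_zero.mp (hC _ _), Nat.le_zero.mp (hc i)]
  obtain ⟨z, hz, hzb⟩ := exists_small_natSolution hβ A a
    (fun i j => by rw [Int.abs_eq_natAbs]; exact_mod_cast hA i j)
    (fun i => by rw [Int.abs_eq_natAbs]; exact_mod_cast ha i) hz₀
  refine ⟨z, hz, fun i => (mulVec_add_apply_le hC hc hzb i).trans_eq ?_⟩
  simp only [Fintype.card_fin]
  ring
end

section
/- In a graph group G(A,I), for irreducible traces s, t ∈ IRR(A^{±1},I) there exist unique factorizations s = up and t = p^{-1}v in the trace monoid M(A^{±1},I) such that uv ∈ IRR(A^{±1},I); consequently uv is the irreducible normal form of st. -/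
/-- The commutation relation on words generated by an independence relation. -/
def traceRel (A : Type) (I : A → A → Prop) : FreeMonoid A → FreeMonoid A → Prop :=
  fun x y => ∃ a b, I a b ∧ x = FreeMonoid.of a * FreeMonoid.of b ∧ y = FreeMonoid.of b * FreeMonoid.of a

/-- The trace congruence ≡_I. -/
def traceCon (A : Type) (I : A → A → Prop) : Con (FreeMonoid A) := conGen (traceRel A I)

/-- The trace monoid M(A,I). -/
abbrev Trace (A : Type) (I : A → A → Prop) := (traceCon A I).Quotient

/-- The trace represented by a word. -/
def trc (A : Type) (I : A → A → Prop) (w : FreeMonoid A) : Trace A I := (traceCon A I).mk' w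

/-- s I t: every letter of s is independent of every letter of t. -/
def TraceIndep (A : Type) (I : A → A → Prop) (s t : Trace A I) : Prop :=
  ∀ w w' : FreeMonoid A, s = trc A I w → t = trc A I w' →
    ∀ a ∈ w.toList, ∀ b ∈ w'.toList, I a b

/-- A trace is connected if it has no nontrivial factorization into independent factors. -/
def TraceConnected (A : Type) (I : A → A → Prop) (t : Trace A I) : Prop :=
  ∀ u v : Trace A I, t = u * v → TraceIndep A I u v → u = 1 ∨ v = 1

/-- The set of prefixes of a trace. -/
def tracePrefixes (A : Type) (I : A → A → Prop) (t : Trace A I) : Set (Trace A I) :=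
  {p | ∃ q, t = p * q}

/-- The independence relation extended to letters and their formal inverses:
`Sum.inl a` is the generator a, `Sum.inr a` its inverse a⁻¹. -/
def extI (A : Type) (I : A → A → Prop) : A ⊕ A → A ⊕ A → Prop :=
  fun x y => I (Sum.elim id id x) (Sum.elim id id y)

/-- Traces over the alphabet A^{±1}. -/
abbrev GTrace (A : Type) (I : A → A → Prop) := Trace (A ⊕ A) (extI A I)

/-- The congruence on words over A^{±1} defining the graph group G(A,I):
commutations of independent letters and free cancellations a a⁻¹ = 1. -/
def ggCon (A : Type) (I : A → A → Prop) : Con (FreeMonoid (A ⊕ A)) :=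
  conGen (fun x y => traceRel (A ⊕ A) (extI A I) x y ∨
    ∃ a : A ⊕ A, x = FreeMonoid.of a * FreeMonoid.of (Sum.swap a) ∧ y = 1)

/-- An irreducible trace: one containing no factor a a⁻¹. -/
def IsIRR (A : Type) (I : A → A → Prop) (t : GTrace A I) : Prop :=
  ¬ ∃ (u v : GTrace A I) (a : A ⊕ A),
      t = u * trc (A ⊕ A) (extI A I)
            (FreeMonoid.of a * FreeMonoid.of (Sum.swap a)) * v

/-- The formal inverse of a word over A^{±1}. -/
def wordInv (A : Type) (w : FreeMonoid (A ⊕ A)) : FreeMonoid (A ⊕ A) :=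
  FreeMonoid.ofList ((FreeMonoid.toList w).reverse.map Sum.swap)

/-!
Trace monoids are cancellative and satisfy Levi's lemma: `uv = xy` forces `u = z₁z₂`, `v = z₃z₄`,
`x = z₁z₃`, `y = z₂z₄` with `z₂` independent of `z₃`. If `s` and `t` are irreducible but
`st = (x a)(a⁻¹ y)`, Levi's lemma shows that `a` ends `s` and `a⁻¹` begins `t`; cancelling such
pairs one at a time (induction on the length of `s`) gives the factorization. For uniqueness,
induct on `p = p'a`: the letter `a⁻¹` begins `t = p₁⁻¹v₁` for any other factorization, and it
cannot come from `v₁`, since then `a` would end `u₁` (making `u₁v₁` reducible) or `p₁` (while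
`a⁻¹` is independent of `p₁⁻¹`); so `a` can be cancelled from both. Finally `st = u p p⁻¹ v` as
traces, and `p p⁻¹` cancels freely in the graph group.
-/

namespace Trace

variable {S : Type} {J : S → S → Prop}

variable (J) in
def tr (w : List S) : Trace S J := trc S J (FreeMonoid.ofList w)

@[simp] theorem tr_nil : tr J ([] : List S) = 1 := map_one _

theorem tr_append (u v : List S) : tr J (u ++ v) = tr J u * tr J v := by
  simp [tr, trc, FreeMonoid.ofList_append]

theorem tr_cons (a : S) (w : List S) : tr J (a :: w) = tr J [a] * tr J w :=
  tr_append [a] w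

theorem trc_mul (x y : FreeMonoid S) : trc S J (x * y) = trc S J x * trc S J y :=
  map_mul ..

theorem trc_eq_tr (w : FreeMonoid S) : trc S J w = tr J w.toList := by
  simp [tr]

theorem tr_surjective : Function.Surjective (tr J) := fun t => by
  obtain ⟨w, rfl⟩ := Con.mk'_surjective t
  exact ⟨w.toList, (trc_eq_tr w).symm⟩

theorem tr_eq_tr_iff_traceCon {u v : List S} :
    tr J u = tr J v ↔ traceCon S J (FreeMonoid.ofList u) (FreeMonoid.ofList v) :=
  Con.eq _

theorem tr_pair_comm {a b : S} (h : J a b) : tr J [a] * tr J [b] = tr J [b] * tr J [a] := by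
  simp only [← tr_append, List.singleton_append]
  exact tr_eq_tr_iff_traceCon.mpr (ConGen.Rel.of _ _ ⟨a, b, h, rfl, rfl⟩)

theorem tr_swap {a b : S} (h : J a b) (l₁ l₂ : List S) :
    tr J (l₁ ++ a :: b :: l₂) = tr J (l₁ ++ b :: a :: l₂) := by
  rw [tr_append, tr_append, tr_cons a (b :: l₂), tr_cons b l₂, tr_cons b (a :: l₂), tr_cons a l₂,
    ← mul_assoc (tr J [a]), tr_pair_comm h, mul_assoc]

def Swap (J : S → S → Prop) (w w' : List S) : Prop :=
  ∃ l₁ l₂ a b, J a b ∧ w = l₁ ++ a :: b :: l₂ ∧ w' = l₁ ++ b :: a :: l₂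

theorem Swap.symm (hJ : ∀ a b, J a b → J b a) {w w' : List S} : Swap J w w' → Swap J w' w
  | ⟨l₁, l₂, a, b, hab, hw, hw'⟩ => ⟨l₁, l₂, b, a, hJ _ _ hab, hw', hw⟩

theorem Swap.append {w w' : List S} (h : Swap J w w') (x y : List S) :
    Swap J (x ++ w ++ y) (x ++ w' ++ y) := by
  obtain ⟨l₁, l₂, a, b, hab, rfl, rfl⟩ := h
  exact ⟨x ++ l₁, l₂ ++ y, a, b, hab, by simp, by simp⟩

theorem Swap.perm {w w' : List S} (h : Swap J w w') : w.Perm w' := by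
  obtain ⟨l₁, l₂, a, b, -, rfl, rfl⟩ := h
  exact .append_left _ (.swap _ _ _)

theorem tr_eq_tr_iff (hJ : ∀ a b, J a b → J b a) {u v : List S} :
    tr J u = tr J v ↔ Relation.ReflTransGen (Swap J) u v := by
  constructor
  · let swapCon : Con (FreeMonoid S) :=
      { r := fun x y => Relation.ReflTransGen (Swap J) x.toList y.toList
        iseqv := ⟨fun _ => .refl,
          fun h => (Relation.reflTransGen_swap.mpr h).lift id fun _ _ => Swap.symm hJ, .trans⟩
        mul' := fun {_ x y _} h₁ h₂ =>
          (h₁.lift (· ++ y.toList) fun _ _ h => by simpa using h.append [] _).trans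
            (h₂.lift (x.toList ++ ·) fun _ _ h => by simpa using h.append _ []) }
    have hle : traceCon S J ≤ swapCon := Con.conGen_le.mpr <| by
      rintro _ _ ⟨a, b, hab, rfl, rfl⟩
      exact .single ⟨[], [], a, b, hab, rfl, rfl⟩
    exact fun h => hle (tr_eq_tr_iff_traceCon.mp h)
  · intro h
    induction h with
    | refl => rfl
    | tail _ hs ih =>
      obtain ⟨l₁, l₂, a, b, hab, rfl, rfl⟩ := hs
      exact ih.trans (tr_swap hab l₁ l₂)

theorem perm_of_tr_eq (hJ : ∀ a b, J a b → J b a) {u v : List S} (h : tr J u = tr J v) :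
    u.Perm v := by
  have hc := (tr_eq_tr_iff hJ).mp h
  clear h
  induction hc with
  | refl => rfl
  | tail _ hs ih => exact ih.trans hs.perm

theorem exists_split_of_swap (hJ : ∀ a b, J a b → J b a) {W W' W₁ W₂ : List S} {a : S}
    (hs : Swap J W W') (hW : W = W₁ ++ a :: W₂) (hind : ∀ b ∈ W₁, J b a) :
    ∃ V₁ V₂, W' = V₁ ++ a :: V₂ ∧ (∀ b ∈ V₁, J b a) ∧ tr J (V₁ ++ V₂) = tr J (W₁ ++ W₂) := by
  obtain ⟨l₁, l₂, c, d, hcd, rfl, rfl⟩ := hs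
  rcases List.append_eq_append_iff.mp hW with ⟨_ | ⟨e, _ | ⟨f, m⟩⟩, rfl, hm⟩ | ⟨_ | ⟨e, m⟩, rfl, hm⟩
  · obtain ⟨rfl, rfl⟩ : c = a ∧ W₂ = d :: l₂ := by simpa [eq_comm] using hm
    refine ⟨l₁ ++ [d], l₂, by simp, ?_, by simp⟩
    simpa [or_imp, forall_and] using ⟨fun b hb => hind b (by simp [hb]), hJ _ _ hcd⟩
  · obtain ⟨rfl, rfl, rfl⟩ : c = e ∧ d = a ∧ l₂ = W₂ := by simpa using hm
    exact ⟨l₁, c :: l₂, by simp, fun b hb => hind b (by simp [hb]), by simp⟩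
  · obtain ⟨rfl, rfl, rfl⟩ : c = e ∧ d = f ∧ l₂ = m ++ a :: W₂ := by simpa using hm
    refine ⟨l₁ ++ d :: c :: m, W₂, by simp, fun b hb => hind b ?_, ?_⟩
    · simp only [List.mem_append, List.mem_cons] at hb ⊢
      tauto
    · simpa using (tr_swap hcd l₁ (m ++ W₂)).symm
  · obtain ⟨rfl, rfl⟩ : c = a ∧ W₂ = d :: l₂ := by simpa [eq_comm] using hm
    refine ⟨W₁ ++ [d], l₂, by simp, ?_, by simp⟩
    simpa [or_imp, forall_and] using ⟨hind, hJ _ _ hcd⟩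
  · obtain ⟨rfl, rfl⟩ : e = a ∧ W₂ = m ++ c :: d :: l₂ := by simpa [eq_comm] using hm
    refine ⟨W₁, m ++ d :: c :: l₂, by simp, hind, ?_⟩
    simpa using (tr_swap hcd (W₁ ++ m) l₂).symm

theorem exists_split_of_tr_cons_eq (hJ : ∀ a b, J a b → J b a) {W u : List S} {a : S}
    (h : tr J (a :: u) = tr J W) :
    ∃ W₁ W₂, W = W₁ ++ a :: W₂ ∧ (∀ b ∈ W₁, J b a) ∧ tr J (W₁ ++ W₂) = tr J u := by
  have hc := (tr_eq_tr_iff hJ).mp h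
  clear h
  induction hc with
  | refl => exact ⟨[], u, rfl, by simp, rfl⟩
  | tail _ hs ih =>
    obtain ⟨W₁, W₂, hW, hind, htr⟩ := ih
    obtain ⟨V₁, V₂, hV, hVind, hVtr⟩ := exists_split_of_swap hJ hs hW hind
    exact ⟨V₁, V₂, hV, hVind, hVtr.trans htr⟩

theorem commute_tr_letter {a : S} {w : List S} (h : ∀ b ∈ w, J b a) :
    Commute (tr J w) (tr J [a]) := by
  induction w with
  | nil => simp
  | cons b w ih =>
    rw [tr_cons]
    exact .mul_left (tr_pair_comm (h b (by simp)))
      (ih fun c hc => h c (List.mem_cons_of_mem _ hc))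

theorem traceIndep_tr_iff (hJ : ∀ a b, J a b → J b a) {u v : List S} :
    TraceIndep S J (tr J u) (tr J v) ↔ ∀ a ∈ u, ∀ b ∈ v, J a b := by
  refine ⟨fun h => h (.ofList u) (.ofList v) rfl rfl, fun h w w' hu hv a ha b hb => ?_⟩
  rw [trc_eq_tr] at hu hv
  exact h a ((perm_of_tr_eq hJ hu).mem_iff.mpr ha) b ((perm_of_tr_eq hJ hv).mem_iff.mpr hb)

theorem _root_.TraceIndep.symm (hJ : ∀ a b, J a b → J b a) {s t : Trace S J}
    (h : TraceIndep S J s t) : TraceIndep S J t s := by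
  obtain ⟨u, rfl⟩ := tr_surjective s
  obtain ⟨v, rfl⟩ := tr_surjective t
  rw [traceIndep_tr_iff hJ] at h ⊢
  exact fun b hb a ha => hJ _ _ (h a ha b hb)

theorem traceIndep_mul_right_iff (hJ : ∀ a b, J a b → J b a) {s t t' : Trace S J} :
    TraceIndep S J s (t * t') ↔ TraceIndep S J s t ∧ TraceIndep S J s t' := by
  obtain ⟨u, rfl⟩ := tr_surjective s
  obtain ⟨v, rfl⟩ := tr_surjective t
  obtain ⟨v', rfl⟩ := tr_surjective t'
  simp only [← tr_append, traceIndep_tr_iff hJ, List.mem_append, or_imp, forall_and]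

theorem traceIndep_comm (hJ : ∀ a b, J a b → J b a) {s t : Trace S J} :
    TraceIndep S J s t ↔ TraceIndep S J t s :=
  ⟨.symm hJ, .symm hJ⟩

theorem traceIndep_mul_left_iff (hJ : ∀ a b, J a b → J b a) {s s' t : Trace S J} :
    TraceIndep S J (s * s') t ↔ TraceIndep S J s t ∧ TraceIndep S J s' t := by
  rw [traceIndep_comm hJ, traceIndep_mul_right_iff hJ, traceIndep_comm hJ,
    traceIndep_comm hJ (s := t)]

theorem traceIndep_one_right (hJ : ∀ a b, J a b → J b a) (s : Trace S J) :
    TraceIndep S J s 1 := by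
  obtain ⟨u, rfl⟩ := tr_surjective s
  simpa using (traceIndep_tr_iff hJ (u := u) (v := [])).mpr (by simp)

theorem _root_.TraceIndep.commute (hJ : ∀ a b, J a b → J b a) {s t : Trace S J}
    (h : TraceIndep S J s t) : Commute s t := by
  obtain ⟨u, rfl⟩ := tr_surjective s
  obtain ⟨v, rfl⟩ := tr_surjective t
  rw [traceIndep_tr_iff hJ] at h
  induction v with
  | nil => simp
  | cons b v ih =>
    rw [tr_cons]
    exact .mul_right (commute_tr_letter fun a ha => h a ha b (by simp))
      (ih fun a ha c hc => h a ha c (List.mem_cons_of_mem _ hc))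

theorem letter_mul_eq_mul (hJ : ∀ a b, J a b → J b a) {a : S} {w u v : Trace S J}
    (h : tr J [a] * w = u * v) :
    (∃ u', u = tr J [a] * u') ∨ (TraceIndep S J u (tr J [a]) ∧ ∃ v', v = tr J [a] * v') := by
  obtain ⟨x, rfl⟩ := tr_surjective w
  obtain ⟨U, rfl⟩ := tr_surjective u
  obtain ⟨V, rfl⟩ := tr_surjective v
  rw [← tr_cons, ← tr_append] at h
  obtain ⟨W₁, W₂, hW, hind, -⟩ := exists_split_of_tr_cons_eq hJ h
  rcases List.append_eq_append_iff.mp hW with ⟨m, rfl, rfl⟩ | ⟨_ | ⟨e, m⟩, rfl, hV⟩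
  · refine .inr ⟨(traceIndep_tr_iff hJ).mpr ?_, tr J (m ++ W₂), ?_⟩
    · simpa using fun b hb => hind b (by simp [hb])
    · rw [tr_append, tr_cons, ← mul_assoc, (commute_tr_letter ?_).eq, mul_assoc, ← tr_append]
      exact fun b hb => hind b (by simp [hb])
  · obtain rfl : V = a :: W₂ := by simpa using hV.symm
    exact .inr ⟨(traceIndep_tr_iff hJ).mpr (by simpa using hind), tr J W₂, tr_cons _ _⟩
  · obtain ⟨rfl, rfl⟩ : e = a ∧ W₂ = m ++ V := by simpa [eq_comm] using hV
    refine .inl ⟨tr J (W₁ ++ m), ?_⟩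
    rw [tr_append, tr_cons, ← mul_assoc, (commute_tr_letter hind).eq, mul_assoc, ← tr_append]

theorem letter_mul_cancel (hJ : ∀ a b, J a b → J b a) {a : S} {s t : Trace S J}
    (h : tr J [a] * s = tr J [a] * t) : s = t := by
  obtain ⟨x, rfl⟩ := tr_surjective s
  obtain ⟨y, rfl⟩ := tr_surjective t
  rw [← tr_cons, ← tr_cons] at h
  obtain ⟨_ | ⟨b, W₁⟩, W₂, hW, hind, htr⟩ := exists_split_of_tr_cons_eq hJ h
  · obtain rfl : y = W₂ := by simpa using hW
    exact htr.symm
  · obtain ⟨rfl, rfl⟩ : b = a ∧ y = W₁ ++ a :: W₂ := by simpa [eq_comm] using hW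
    rw [← htr, List.cons_append, tr_cons b (W₁ ++ W₂), tr_append W₁, tr_append W₁, tr_cons b W₂,
      ← mul_assoc, ← mul_assoc, (commute_tr_letter ?_).eq]
    exact fun c hc => hind c (List.mem_cons_of_mem _ hc)

theorem levi (hJ : ∀ a b, J a b → J b a) {u v x y : Trace S J} (h : u * v = x * y) :
    ∃ z₁ z₂ z₃ z₄, u = z₁ * z₂ ∧ v = z₃ * z₄ ∧ x = z₁ * z₃ ∧ y = z₂ * z₄ ∧
      TraceIndep S J z₂ z₃ := by
  obtain ⟨l, rfl⟩ := tr_surjective x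
  induction l generalizing u v with
  | nil => exact ⟨1, u, 1, v, by simp, by simp, by simp, by simpa using h.symm,
      traceIndep_one_right hJ u⟩
  | cons a l ih =>
    rw [tr_cons, mul_assoc] at h
    rcases letter_mul_eq_mul hJ h.symm with ⟨u', rfl⟩ | ⟨hu, v', rfl⟩
    · rw [mul_assoc] at h
      obtain ⟨z₁, z₂, z₃, z₄, rfl, rfl, hx, rfl, hz⟩ := ih (letter_mul_cancel hJ h)
      refine ⟨tr J [a] * z₁, z₂, z₃, z₄, (mul_assoc ..).symm, rfl, ?_, rfl, hz⟩
      rw [tr_cons, hx, mul_assoc]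
    · rw [← mul_assoc, (hu.commute hJ).eq, mul_assoc] at h
      obtain ⟨z₁, z₂, z₃, z₄, rfl, rfl, hx, rfl, hz⟩ := ih (letter_mul_cancel hJ h)
      rw [traceIndep_mul_left_iff hJ] at hu
      refine ⟨z₁, z₂, tr J [a] * z₃, z₄, rfl, (mul_assoc ..).symm, ?_, rfl, ?_⟩
      · rw [tr_cons, hx, ← mul_assoc, ← (hu.1.commute hJ).eq, mul_assoc]
      · exact (traceIndep_mul_right_iff hJ).mpr ⟨hu.2, hz⟩

theorem eq_one_or_eq_mul_letter (t : Trace S J) :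
    t = 1 ∨ ∃ t' a, t = t' * tr J [a] := by
  obtain ⟨w, rfl⟩ := tr_surjective t
  rcases List.eq_nil_or_concat w with rfl | ⟨w', a, rfl⟩
  · exact .inl tr_nil
  · exact .inr ⟨tr J w', a, by rw [List.concat_eq_append, tr_append]⟩

section Reverse

variable {S' : Type} {J' : S' → S' → Prop}

def reverseMap (f : S → S') (hf : ∀ a b, J a b → J' (f a) (f b)) :
    Trace S J →* (Trace S' J')ᵐᵒᵖ :=
  (traceCon S J).lift (FreeMonoid.lift fun a => MulOpposite.op (tr J' [f a])) <|
    Con.conGen_le.mpr <| by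
      rintro _ _ ⟨a, b, hab, rfl, rfl⟩
      simp only [Con.ker_rel, map_mul, FreeMonoid.lift_eval_of, ← MulOpposite.op_mul,
        tr_pair_comm (hf a b hab)]

theorem reverseMap_tr (f : S → S') (hf : ∀ a b, J a b → J' (f a) (f b)) (w : List S) :
    (reverseMap f hf (tr J w)).unop = tr J' (w.reverse.map f) := by
  induction w with
  | nil => simp
  | cons a w ih =>
    rw [tr_cons, map_mul, MulOpposite.unop_mul, ih, List.reverse_cons, List.map_append,
      tr_append]
    rfl

def reverse (t : Trace S J) : Trace S J := (reverseMap id (fun _ _ h => h) t).unop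

theorem reverse_tr (w : List S) : reverse (tr J w) = tr J w.reverse := by
  simp [reverse, reverseMap_tr]

theorem reverse_mul (s t : Trace S J) : reverse (s * t) = reverse t * reverse s := by
  simp [reverse]

theorem reverse_reverse (t : Trace S J) : reverse (reverse t) = t := by
  obtain ⟨w, rfl⟩ := tr_surjective t
  simp [reverse_tr]

theorem reverse_letter (a : S) : reverse (tr J [a]) = tr J [a] := reverse_tr [a]

theorem traceIndep_reverse_iff (hJ : ∀ a b, J a b → J b a) {s t : Trace S J} :
    TraceIndep S J (reverse s) (reverse t) ↔ TraceIndep S J s t := by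
  obtain ⟨u, rfl⟩ := tr_surjective s
  obtain ⟨v, rfl⟩ := tr_surjective t
  simp [reverse_tr, traceIndep_tr_iff hJ]

theorem mul_letter_eq_mul (hJ : ∀ a b, J a b → J b a) {a : S} {w u v : Trace S J}
    (h : w * tr J [a] = u * v) :
    (∃ v', v = v' * tr J [a]) ∨ (TraceIndep S J (tr J [a]) v ∧ ∃ u', u = u' * tr J [a]) := by
  have hr := congrArg reverse h
  rw [reverse_mul, reverse_mul, reverse_letter] at hr
  rcases letter_mul_eq_mul hJ hr with ⟨v', hv⟩ | ⟨hv, u', hu⟩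
  · refine .inl ⟨reverse v', ?_⟩
    rw [← reverse_reverse v, hv, reverse_mul, reverse_letter]
  · refine .inr ⟨?_, reverse u', ?_⟩
    · rw [← traceIndep_reverse_iff hJ, reverse_letter]
      exact hv.symm hJ
    · rw [← reverse_reverse u, hu, reverse_mul, reverse_letter]

theorem mul_letter_cancel (hJ : ∀ a b, J a b → J b a) {a : S} {s t : Trace S J}
    (h : s * tr J [a] = t * tr J [a]) : s = t := by
  have hr := congrArg reverse h
  rw [reverse_mul, reverse_mul, reverse_letter] at hr
  rw [← reverse_reverse s, letter_mul_cancel hJ hr, reverse_reverse]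

end Reverse

end Trace

namespace GTrace

open Trace

variable {A : Type} {I : A → A → Prop}

theorem extI_symm (hsym : ∀ a b, I a b → I b a) (x y : A ⊕ A) :
    extI A I x y → extI A I y x :=
  hsym _ _

theorem extI_swap_right (x y : A ⊕ A) : extI A I x (Sum.swap y) ↔ extI A I x y := by
  cases y <;> rfl

theorem extI_swap_swap (x y : A ⊕ A) : extI A I (Sum.swap x) (Sum.swap y) ↔ extI A I x y := by
  cases x <;> cases y <;> rfl

theorem not_extI_swap (hirr : ∀ a, ¬ I a a) (x : A ⊕ A) : ¬ extI A I x (Sum.swap x) := by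
  cases x <;> exact hirr _

theorem traceIndep_swap_letter_iff (hsym : ∀ a b, I a b → I b a) {t : GTrace A I} {a : A ⊕ A} :
    TraceIndep _ _ t (tr _ [Sum.swap a]) ↔ TraceIndep _ _ t (tr _ [a]) := by
  obtain ⟨w, rfl⟩ := tr_surjective t
  simp [traceIndep_tr_iff (extI_symm hsym), extI_swap_right]

def inv (t : GTrace A I) : GTrace A I :=
  (reverseMap Sum.swap (fun x y => (extI_swap_swap x y).mpr) t).unop

theorem inv_tr (w : List (A ⊕ A)) :
    inv (tr (extI A I) w) = tr (extI A I) (w.reverse.map Sum.swap) :=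
  reverseMap_tr ..

theorem inv_mul (s t : GTrace A I) : inv (s * t) = inv t * inv s := by
  simp [inv]

theorem inv_one : inv (1 : GTrace A I) = 1 := by
  simp [inv]

theorem inv_inv (t : GTrace A I) : inv (inv t) = t := by
  obtain ⟨w, rfl⟩ := tr_surjective t
  simp [inv_tr, List.map_reverse, Function.comp_def]

theorem inv_letter (a : A ⊕ A) : inv (tr (extI A I) [a]) = tr (extI A I) [Sum.swap a] :=
  inv_tr [a]

theorem trc_wordInv (w : FreeMonoid (A ⊕ A)) :
    trc (A ⊕ A) (extI A I) (wordInv A w) = inv (trc (A ⊕ A) (extI A I) w) := by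
  rw [trc_eq_tr, trc_eq_tr, inv_tr]
  rfl

theorem _root_.IsIRR.ne {t : GTrace A I} (h : IsIRR A I t) (u v : GTrace A I) (a : A ⊕ A) :
    t ≠ u * tr _ [a] * tr _ [Sum.swap a] * v :=
  fun ht => h ⟨u, v, a, by rw [ht, trc_mul, ← mul_assoc u]; rfl⟩

theorem exists_eq_of_not_isIRR {t : GTrace A I} (h : ¬ IsIRR A I t) :
    ∃ u v a, t = u * tr _ [a] * tr _ [Sum.swap a] * v := by
  obtain ⟨u, v, a, ht⟩ := not_not.mp h
  exact ⟨u, v, a, by rw [ht, trc_mul, ← mul_assoc u]; rfl⟩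

theorem _root_.IsIRR.of_mul_left {s t : GTrace A I} (h : IsIRR A I (s * t)) : IsIRR A I s :=
  fun ⟨u, v, a, hs⟩ => h ⟨u, v * t, a, by rw [hs]; simp only [mul_assoc]⟩

theorem _root_.IsIRR.of_mul_right {s t : GTrace A I} (h : IsIRR A I (s * t)) : IsIRR A I t :=
  fun ⟨u, v, a, ht⟩ => h ⟨s * u, v, a, by rw [ht]; simp only [mul_assoc]⟩

theorem exists_eq_mul_letter_of_not_isIRR_mul (hsym : ∀ a b, I a b → I b a)
    (hirr : ∀ a, ¬ I a a) {s t : GTrace A I} (hs : IsIRR A I s) (ht : IsIRR A I t)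
    (hst : ¬ IsIRR A I (s * t)) :
    ∃ a s' t', s = s' * tr _ [a] ∧ t = tr _ [Sum.swap a] * t' := by
  have hJ := extI_symm hsym
  obtain ⟨x, y, c, h⟩ := exists_eq_of_not_isIRR hst
  rw [mul_assoc _ _ y] at h
  obtain ⟨z₁, z₂, z₃, z₄, rfl, rfl, hx, hy, hz⟩ := levi hJ h
  -- `c` ends `z₁` or `z₃` and `c⁻¹` begins `z₂` or `z₄`; only the combination `z₁`, `z₄` is
  -- compatible with `z₂ I z₃` and with the irreducibility of `s = z₁z₂` and `t = z₃z₄`.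
  rcases mul_letter_eq_mul hJ hx with ⟨z₃, rfl⟩ | ⟨hz₃, z₁, rfl⟩ <;>
    rcases letter_mul_eq_mul hJ hy with ⟨z₂, rfl⟩ | ⟨hz₂, z₄, rfl⟩
  · rw [traceIndep_mul_left_iff hJ, traceIndep_mul_right_iff hJ,
      traceIndep_mul_right_iff hJ] at hz
    have := (traceIndep_tr_iff hJ).mp hz.1.2 _ (List.mem_singleton_self _) _
      (List.mem_singleton_self _)
    exact (not_extI_swap hirr c (hJ _ _ this)).elim
  · exact absurd (by simp only [mul_assoc]) (ht.ne z₃ z₄ c)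
  · exact absurd (by simp only [mul_assoc]) (hs.ne z₁ z₂ c)
  · refine ⟨c, z₁ * z₂, z₃ * z₄, ?_, ?_⟩
    · rw [mul_assoc, mul_assoc, ((traceIndep_swap_letter_iff hsym).mp hz₂).commute hJ |>.eq]
    · rw [← mul_assoc, ((traceIndep_swap_letter_iff hsym).mpr (hz₃.symm hJ)).commute hJ |>.eq,
        mul_assoc]

def IsReducedFactorization (s t u p v : GTrace A I) : Prop :=
  s = u * p ∧ t = inv p * v ∧ IsIRR A I (u * v)

theorem exists_isReducedFactorization (hsym : ∀ a b, I a b → I b a) (hirr : ∀ a, ¬ I a a)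
    {s t : GTrace A I} (hs : IsIRR A I s) (ht : IsIRR A I t) :
    ∃ u p v, IsReducedFactorization s t u p v := by
  obtain ⟨w, rfl⟩ := tr_surjective s
  induction h : w.length using Nat.strong_induction_on generalizing w t with
  | _ n ih =>
  by_cases hst : IsIRR A I (tr _ w * t)
  · exact ⟨tr _ w, 1, t, (mul_one _).symm, by rw [inv_one, one_mul], hst⟩
  obtain ⟨a, s', t', hs', rfl⟩ := exists_eq_mul_letter_of_not_isIRR_mul hsym hirr hs ht hst
  obtain ⟨w', rfl⟩ := tr_surjective s'
  have hlen : w'.length < n := by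
    have := (perm_of_tr_eq (extI_symm hsym) (hs'.trans (tr_append w' [a]).symm)).length_eq
    rw [List.length_append, List.length_singleton] at this
    omega
  rw [hs'] at hs
  obtain ⟨u, p, v, hu, hp, huv⟩ := ih _ hlen ht.of_mul_right _ hs.of_mul_left rfl
  refine ⟨u, p * tr _ [a], v, by rw [hs', hu, mul_assoc], ?_, huv⟩
  rw [hp, inv_mul, inv_letter, mul_assoc]

theorem IsReducedFactorization.unique (hsym : ∀ a b, I a b → I b a) (hirr : ∀ a, ¬ I a a)
    {s t u₁ p₁ v₁ u₂ p₂ v₂ : GTrace A I} (h₁ : IsReducedFactorization s t u₁ p₁ v₁)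
    (h₂ : IsReducedFactorization s t u₂ p₂ v₂) : u₁ = u₂ ∧ p₁ = p₂ ∧ v₁ = v₂ := by
  have hJ := extI_symm hsym
  obtain ⟨l, rfl⟩ := tr_surjective p₂
  induction l using List.reverseRecOn generalizing s t u₁ p₁ v₁ u₂ v₂ with
  | nil =>
    obtain ⟨rfl, rfl, hst⟩ : s = u₂ ∧ t = v₂ ∧ IsIRR A I (u₂ * v₂) := by
      simpa [IsReducedFactorization, inv_one] using h₂
    obtain ⟨rfl, rfl, -⟩ := h₁
    rcases eq_one_or_eq_mul_letter p₁ with rfl | ⟨q, b, rfl⟩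
    · simp [inv_one]
    · refine absurd ?_ (hst.ne (u₁ * q) (inv q * v₁) b)
      rw [inv_mul, inv_letter]
      simp only [mul_assoc]
  | append_singleton l a ih =>
    obtain ⟨rfl, ht, huv⟩ := h₁
    obtain ⟨hs₂, ht₂, huv₂⟩ := h₂
    rw [tr_append, inv_mul, inv_letter, mul_assoc] at ht₂
    rw [tr_append, ← mul_assoc] at hs₂
    rcases letter_mul_eq_mul hJ (ht₂.symm.trans ht) with ⟨r, hr⟩ | ⟨hp, v₁', rfl⟩
    · have hp₁ : p₁ = inv r * tr _ [a] := by
        rw [← inv_inv p₁, hr, inv_mul, inv_letter, Sum.swap_swap]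
      rw [hp₁, ← mul_assoc] at hs₂
      rw [hr, mul_assoc] at ht
      obtain ⟨rfl, hrl, rfl⟩ := ih ⟨(mul_letter_cancel hJ hs₂).symm, by
        rw [inv_inv, letter_mul_cancel hJ (ht₂.symm.trans ht)], huv⟩ ⟨rfl, rfl, huv₂⟩
      exact ⟨rfl, by rw [hp₁, hrl, tr_append], rfl⟩
    · exfalso
      rcases mul_letter_eq_mul hJ hs₂.symm with ⟨p', rfl⟩ | ⟨-, u', rfl⟩
      · rw [inv_mul, inv_letter, traceIndep_mul_left_iff hJ] at hp
        have := (traceIndep_tr_iff hJ).mp hp.1 _ (List.mem_singleton_self _) _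
          (List.mem_singleton_self _)
        exact hirr _ this
      · exact huv.ne u' v₁' a (by simp only [mul_assoc])

theorem traceCon_le_ggCon : traceCon (A ⊕ A) (extI A I) ≤ ggCon A I :=
  Con.conGen_le.mpr fun _ _ h => ConGen.Rel.of _ _ (.inl h)

theorem ggCon_mul_wordInv (w : FreeMonoid (A ⊕ A)) :
    ggCon A I (w * wordInv A w) 1 := by
  induction w using FreeMonoid.inductionOn' with
  | one => exact (ggCon A I).refl 1
  | of_mul a w ih =>
    have hinv : wordInv A (FreeMonoid.of a * w) = wordInv A w * FreeMonoid.of (Sum.swap a) := by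
      simp [wordInv, FreeMonoid.ofList_append]
    have hcancel : ggCon A I (FreeMonoid.of a * FreeMonoid.of (Sum.swap a)) 1 :=
      ConGen.Rel.of _ _ (.inr ⟨a, rfl, rfl⟩)
    rw [hinv, mul_assoc, ← mul_assoc w]
    refine (ggCon A I).trans ?_ hcancel
    simpa using (ggCon A I).mul ((ggCon A I).refl (FreeMonoid.of a))
      ((ggCon A I).mul ih ((ggCon A I).refl (FreeMonoid.of (Sum.swap a))))

theorem isReducedFactorization_iff {s t u p v : GTrace A I} :
    IsReducedFactorization s t u p v ↔ s = u * p ∧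
      (∃ wp, p = trc (A ⊕ A) (extI A I) wp ∧ t = trc (A ⊕ A) (extI A I) (wordInv A wp) * v) ∧
      IsIRR A I (u * v) := by
  refine and_congr_right' (and_congr_left' ⟨fun ht => ?_, ?_⟩)
  · obtain ⟨wp, rfl⟩ := Con.mk'_surjective p
    exact ⟨wp, rfl, by rw [ht, trc_wordInv]; rfl⟩
  · rintro ⟨wp, rfl, ht⟩
    rwa [← trc_wordInv]

theorem ggCon_of_isReducedFactorization {ws wt wu wv : FreeMonoid (A ⊕ A)} {p : GTrace A I}
    (h : IsReducedFactorization (trc _ _ ws) (trc _ _ wt) (trc _ _ wu) p (trc _ _ wv)) :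
    ggCon A I (ws * wt) (wu * wv) := by
  obtain ⟨hs, ⟨wp, rfl, ht⟩, -⟩ := isReducedFactorization_iff.mp h
  have htrace : trc (A ⊕ A) (extI A I) (ws * wt) = trc _ _ (wu * (wp * wordInv A wp) * wv) := by
    simp only [trc_mul, hs, ht, mul_assoc]
  refine (ggCon A I).trans (traceCon_le_ggCon ((Con.eq _).mp htrace)) ?_
  simpa using (ggCon A I).mul ((ggCon A I).mul ((ggCon A I).refl wu) (ggCon_mul_wordInv wp))
    ((ggCon A I).refl wv)

end GTrace

theorem irr_product_normal_form_general (A : Type) (I : A → A → Prop)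
    (hirr : ∀ a, ¬ I a a) (hsym : ∀ a b, I a b → I b a)
    (ws wt : FreeMonoid (A ⊕ A))
    (hs : IsIRR A I (trc (A ⊕ A) (extI A I) ws))
    (ht : IsIRR A I (trc (A ⊕ A) (extI A I) wt)) :
    ∃ upv : GTrace A I × GTrace A I × GTrace A I,
      (trc (A ⊕ A) (extI A I) ws = upv.1 * upv.2.1 ∧
        (∃ wp : FreeMonoid (A ⊕ A), upv.2.1 = trc (A ⊕ A) (extI A I) wp ∧
          trc (A ⊕ A) (extI A I) wt = trc (A ⊕ A) (extI A I) (wordInv A wp) * upv.2.2) ∧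
        IsIRR A I (upv.1 * upv.2.2)) ∧
      (∀ y : GTrace A I × GTrace A I × GTrace A I,
        (trc (A ⊕ A) (extI A I) ws = y.1 * y.2.1 ∧
          (∃ wp : FreeMonoid (A ⊕ A), y.2.1 = trc (A ⊕ A) (extI A I) wp ∧
            trc (A ⊕ A) (extI A I) wt = trc (A ⊕ A) (extI A I) (wordInv A wp) * y.2.2) ∧
          IsIRR A I (y.1 * y.2.2)) → y = upv) ∧
      (∀ wu wv : FreeMonoid (A ⊕ A),
        upv.1 = trc (A ⊕ A) (extI A I) wu → upv.2.2 = trc (A ⊕ A) (extI A I) wv →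
        ggCon A I (ws * wt) (wu * wv)) := by
  obtain ⟨u, p, v, hf⟩ := GTrace.exists_isReducedFactorization hsym hirr hs ht
  refine ⟨(u, p, v), GTrace.isReducedFactorization_iff.mp hf, ?_, ?_⟩
  · rintro ⟨u', p', v'⟩ hy
    obtain ⟨rfl, rfl, rfl⟩ := (GTrace.isReducedFactorization_iff.mpr hy).unique hsym hirr hf
    rfl
  · rintro wu wv rfl rfl
    exact GTrace.ggCon_of_isReducedFactorization hf

/-- For irreducible traces s, t there are unique factorizations s = u p,
t = p⁻¹ v with u v irreducible; u v is then the normal form of s t. -/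
theorem irr_product_normal_form (A : Type) [Fintype A] (I : A → A → Prop)
    (hirr : ∀ a, ¬ I a a) (hsym : ∀ a b, I a b → I b a)
    (ws wt : FreeMonoid (A ⊕ A))
    (hs : IsIRR A I (trc (A ⊕ A) (extI A I) ws))
    (ht : IsIRR A I (trc (A ⊕ A) (extI A I) wt)) :
    ∃ upv : GTrace A I × GTrace A I × GTrace A I,
      (trc (A ⊕ A) (extI A I) ws = upv.1 * upv.2.1 ∧
        (∃ wp : FreeMonoid (A ⊕ A), upv.2.1 = trc (A ⊕ A) (extI A I) wp ∧
          trc (A ⊕ A) (extI A I) wt = trc (A ⊕ A) (extI A I) (wordInv A wp) * upv.2.2) ∧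
        IsIRR A I (upv.1 * upv.2.2)) ∧
      (∀ y : GTrace A I × GTrace A I × GTrace A I,
        (trc (A ⊕ A) (extI A I) ws = y.1 * y.2.1 ∧
          (∃ wp : FreeMonoid (A ⊕ A), y.2.1 = trc (A ⊕ A) (extI A I) wp ∧
            trc (A ⊕ A) (extI A I) wt = trc (A ⊕ A) (extI A I) (wordInv A wp) * y.2.2) ∧
          IsIRR A I (y.1 * y.2.2)) → y = upv) ∧
      (∀ wu wv : FreeMonoid (A ⊕ A),
        upv.1 = trc (A ⊕ A) (extI A I) wu → upv.2.2 = trc (A ⊕ A) (extI A I) wv →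
        ggCon A I (ws * wt) (wu * wv)) :=
  irr_product_normal_form_general A I hirr hsym ws wt hs ht
end

section
/- For every cyclically reduced irreducible trace w ∈ IRR(A^{±1},I) and every n ∈ ℕ, the power w^n is irreducible. -/
/-- A cyclically reduced trace: not of the form a v a⁻¹. -/
def CycReduced (A : Type) (I : A → A → Prop) (t : GTrace A I) : Prop :=
  ¬ ∃ (a : A ⊕ A) (v : GTrace A I),
      t = trc (A ⊕ A) (extI A I) (FreeMonoid.of a) * v *
            trc (A ⊕ A) (extI A I) (FreeMonoid.of (Sum.swap a))

section Syntactic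

variable {M : Type*} [Monoid M]

def syntacticCon (P : M → Prop) : Con M where
  r x y := ∀ p q, P (p * x * q) ↔ P (p * y * q)
  iseqv := ⟨fun _ _ _ => Iff.rfl, fun h p q => (h p q).symm,
    fun h₁ h₂ p q => (h₁ p q).trans (h₂ p q)⟩
  mul' {_ y₁ x₂ _} h₁ h₂ p q := by
    simpa only [mul_assoc] using
      (h₁ p (x₂ * q)).trans (by simpa only [mul_assoc] using h₂ (p * y₁) q)

end Syntactic

section Traces

variable {A : Type} {I : A → A → Prop}

lemma trc_mul (x y : FreeMonoid A) : trc A I (x * y) = trc A I x * trc A I y := map_mul _ _ _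

lemma trc_pow (x : FreeMonoid A) (n : ℕ) : trc A I (x ^ n) = trc A I x ^ n := map_pow _ _ _

lemma commute_trc_of {a b : A} (h : I a b) :
    Commute (trc A I (.of a)) (trc A I (.of b)) :=
  (Con.eq _).2 (ConGen.Rel.of _ _ ⟨a, b, h, rfl, rfl⟩)

lemma commute_trc_of_ofList {a : A} {l : List A} (h : ∀ b ∈ l, I a b) :
    Commute (trc A I (.of a)) (trc A I (.ofList l)) := by
  induction l with
  | nil => simp [trc]
  | cons b l ih =>
    rw [FreeMonoid.ofList_cons, trc_mul]
    exact (commute_trc_of (h b (by simp))).mul_right (ih fun c hc => h c (by simp [hc]))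

lemma iff_of_traceCon {P : FreeMonoid A → Prop}
    (hP : ∀ p q a b, I a b → (P (p * (.of a * .of b) * q) ↔ P (p * (.of b * .of a) * q)))
    {x y : FreeMonoid A} (h : traceCon A I x y) : P x ↔ P y := by
  have hle : traceCon A I ≤ syntacticCon P :=
    Con.conGen_le.2 fun _ _ ⟨a, b, hab, hx, hy⟩ p q => hx ▸ hy ▸ hP p q a b hab
  simpa using hle h 1 1

end Traces

namespace List

variable {α : Type*}

theorem exists_eq_append_cons_append_cons_of_filter_eq {p : α → Bool} {l L₁ L₂ L₃ : List α}
    {a b : α} (h : l.filter p = L₁ ++ a :: L₂ ++ b :: L₃) :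
    ∃ l₁ l₂ l₃, l = l₁ ++ a :: l₂ ++ b :: l₃ ∧
      l₁.filter p = L₁ ∧ l₂.filter p = L₂ ∧ l₃.filter p = L₃ := by
  obtain ⟨l₁, r, rfl, h₁, hr⟩ := filter_eq_append_iff.1 (h.trans (append_assoc _ _ _))
  obtain ⟨r₁, r₂, rfl, hr₁, -, hr₂⟩ := filter_eq_cons_iff.1 hr
  obtain ⟨s₁, s, rfl, hs₁, hs⟩ := filter_eq_append_iff.1 hr₂
  obtain ⟨s₂, l₃, rfl, hs₂, -, h₃⟩ := filter_eq_cons_iff.1 hs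
  refine ⟨l₁ ++ r₁, s₁ ++ s₂, l₃, by simp, ?_, ?_, h₃⟩
  · rw [filter_append, h₁, filter_eq_nil_iff.2 hr₁, append_nil]
  · rw [filter_append, hs₁, filter_eq_nil_iff.2 hs₂, append_nil]

theorem isChain_append_cons_cons_comm {R : α → α → Prop} {l₁ l₂ : List α} {a b : α}
    (ha : ∀ x, R a x ∧ R x a) (hb : ∀ x, R b x ∧ R x b) :
    IsChain R (l₁ ++ a :: b :: l₂) ↔ IsChain R (l₁ ++ b :: a :: l₂) := by
  simp [isChain_append, isChain_cons, ha, hb]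

theorem isChain_flatten_replicate {R : α → α → Prop} {l : List α} (h : IsChain R l)
    (hwrap : ∀ x ∈ l.getLast?, ∀ y ∈ l.head?, R x y) (n : ℕ) :
    IsChain R (replicate n l).flatten := by
  rcases eq_or_ne l [] with rfl | hl
  · simp
  · refine (isChain_flatten (by simp [mem_replicate, hl.symm])).2
      ⟨?_, isChain_replicate_of_rel n hwrap⟩
    simp only [mem_replicate]
    rintro _ ⟨-, rfl⟩
    exact h

end List

theorem FreeMonoid.toList_pow {α : Type*} (x : FreeMonoid α) (n : ℕ) :
    (x ^ n).toList = (List.replicate n x.toList).flatten := by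
  rw [← List.prod_replicate, toList_prod, List.map_replicate]

section GraphGroupTraces

variable {A : Type} {I : A → A → Prop}

lemma extI_swap_left {c d : A ⊕ A} : extI A I (Sum.swap c) d ↔ extI A I c d := by
  cases c <;> rfl

lemma not_extI_self (hirr : ∀ a, ¬ I a a) (c : A ⊕ A) : ¬ extI A I c c := by
  cases c <;> exact hirr _

lemma not_extI_swap_right (hirr : ∀ a, ¬ I a a) (c : A ⊕ A) : ¬ extI A I c (Sum.swap c) := by
  cases c <;> exact hirr _

open Classical in
noncomputable def depSubword (A : Type) (I : A → A → Prop) (c : A ⊕ A) (x : FreeMonoid (A ⊕ A)) :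
    List (A ⊕ A) :=
  x.toList.filter fun d => ¬ extI A I c d

lemma depSubword_eq_nil_iff {c : A ⊕ A} {l : List (A ⊕ A)} :
    depSubword A I c (.ofList l) = [] ↔ ∀ d ∈ l, extI A I c d := by
  simp [depSubword, List.filter_eq_nil_iff]

/-- Irreducibility of the trace of `x`, read off the word `x` itself; unlike `IsIRR`, it is visibly
stable under commutations of independent letters. -/
def IsTraceReduced (A : Type) (I : A → A → Prop) (x : FreeMonoid (A ⊕ A)) : Prop :=
  ∀ c, (depSubword A I c x).IsChain fun d e => d = c → e ≠ Sum.swap c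

lemma isTraceReduced_swap_iff (hsym : ∀ a b, I a b → I b a) (p q : FreeMonoid (A ⊕ A))
    {a b : A ⊕ A} (hab : extI A I a b) :
    IsTraceReduced A I (p * (.of a * .of b) * q) ↔
      IsTraceReduced A I (p * (.of b * .of a) * q) := by
  refine forall_congr' fun c => ?_
  by_cases hca : extI A I c a
  · simp [depSubword, List.filter_cons, hca]
  by_cases hcb : extI A I c b
  · simp [depSubword, List.filter_cons, hcb]
  have hba : extI A I b a := hsym _ _ hab
  have ha : a ≠ c ∧ a ≠ Sum.swap c := by
    constructor <;> rintro rfl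
    · exact hcb hab
    · exact hcb (extI_swap_left.1 hab)
  have hb : b ≠ c ∧ b ≠ Sum.swap c := by
    constructor <;> rintro rfl
    · exact hca hba
    · exact hca (extI_swap_left.1 hba)
  simp only [depSubword, FreeMonoid.toList_mul, FreeMonoid.toList_of, List.filter_append,
    List.filter_cons, hca, hcb, not_false_eq_true, decide_true, if_true,
    List.append_assoc, List.cons_append, List.nil_append]
  exact List.isChain_append_cons_cons_comm (fun _ => ⟨fun h => absurd h ha.1, fun _ => ha.2⟩)
    (fun _ => ⟨fun h => absurd h hb.1, fun _ => hb.2⟩)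

lemma IsTraceReduced.of_traceCon (hsym : ∀ a b, I a b → I b a) {x y : FreeMonoid (A ⊕ A)}
    (h : traceCon (A ⊕ A) (extI A I) x y) (hx : IsTraceReduced A I x) : IsTraceReduced A I y :=
  (iff_of_traceCon (fun p q _ _ hab => isTraceReduced_swap_iff hsym p q hab) h).1 hx

lemma IsTraceReduced.pow {x : FreeMonoid (A ⊕ A)} (hx : IsTraceReduced A I x)
    (hwrap : ∀ c, ∀ d ∈ (depSubword A I c x).getLast?, ∀ e ∈ (depSubword A I c x).head?,
      d = c → e ≠ Sum.swap c)
    (n : ℕ) : IsTraceReduced A I (x ^ n) := fun c => by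
  simpa [depSubword, FreeMonoid.toList_pow, List.filter_flatten, List.map_replicate] using
    List.isChain_flatten_replicate (hx c) (hwrap c) n

lemma not_isTraceReduced_of_cancel_factor (hirr : ∀ a, ¬ I a a) (u v : FreeMonoid (A ⊕ A))
    (c : A ⊕ A) :
    ¬ IsTraceReduced A I (u * (.of c * .of (Sum.swap c)) * v) := fun h => by
  have := h c
  simp [depSubword, List.filter_append, not_extI_self hirr, not_extI_swap_right hirr] at this

lemma isTraceReduced_of_isIRR {x : FreeMonoid (A ⊕ A)}
    (hx : IsIRR A I (trc (A ⊕ A) (extI A I) x)) : IsTraceReduced A I x := by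
  intro c
  rw [List.isChain_iff_forall_rel_of_append_cons_cons]
  intro d e L₁ L₂ hL (hd : d = c) (he : e = Sum.swap c)
  subst d e
  obtain ⟨l₁, l₂, l₃, hl, -, hl₂, -⟩ :=
    List.exists_eq_append_cons_append_cons_of_filter_eq (L₂ := [])
      (hL.trans (List.append_cons L₁ c _))
  have hcomm := commute_trc_of_ofList (I := extI A I) (a := c) (l := l₂)
    (depSubword_eq_nil_iff.1 hl₂)
  refine hx ⟨trc _ _ (.ofList l₁ * .ofList l₂), trc _ _ (.ofList l₃), c, ?_⟩
  rw [← FreeMonoid.ofList_toList x, hl]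
  simp only [FreeMonoid.ofList_append, FreeMonoid.ofList_cons, trc_mul, mul_assoc]
  rw [← mul_assoc (trc _ _ (.of c)), hcomm.eq, mul_assoc]

lemma depSubword_wrap_of_cycReduced {x : FreeMonoid (A ⊕ A)}
    (hx : CycReduced A I (trc (A ⊕ A) (extI A I) x)) (c : A ⊕ A) :
    ∀ d ∈ (depSubword A I c x).getLast?, ∀ e ∈ (depSubword A I c x).head?,
      d = c → e ≠ Sum.swap c := by
  intro d hd e he (hdc : d = c) (hec : e = Sum.swap c)
  subst d e
  obtain ⟨M, hM⟩ := List.head?_eq_some_iff.1 he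
  obtain ⟨N, hN⟩ := List.getLast?_eq_some_iff.1 hd
  obtain ⟨M', rfl, -⟩ : ∃ M', N = Sum.swap c :: M' ∧ M = M' ++ [c] := by
    rcases List.append_eq_cons_iff.1 (hN.symm.trans hM) with ⟨rfl, h⟩ | h
    · exact absurd (List.cons.inj h).1 (by cases c <;> simp)
    · exact h
  obtain ⟨l₁, l₂, l₃, hl, hl₁, -, hl₃⟩ :=
    List.exists_eq_append_cons_append_cons_of_filter_eq (L₁ := []) (L₃ := []) hN
  have hcomm₁ := commute_trc_of_ofList (I := extI A I) (a := Sum.swap c) (l := l₁)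
    fun d hd => extI_swap_left.2 (depSubword_eq_nil_iff.1 hl₁ d hd)
  have hcomm₃ := commute_trc_of_ofList (I := extI A I) (a := c) (l := l₃)
    (depSubword_eq_nil_iff.1 hl₃)
  refine hx ⟨Sum.swap c, trc _ _ (.ofList l₁ * .ofList l₂ * .ofList l₃), ?_⟩
  rw [Sum.swap_swap, ← FreeMonoid.ofList_toList x, hl]
  simp only [FreeMonoid.ofList_append, FreeMonoid.ofList_cons, trc_mul, mul_assoc]
  rw [hcomm₃.eq, ← mul_assoc (trc _ _ (.ofList l₁)), ← hcomm₁.eq]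
  simp only [mul_assoc]

end GraphGroupTraces

theorem cyclically_reduced_power_irreducible_general (A : Type)
    (I : A → A → Prop) (hirr : ∀ a, ¬ I a a) (hsym : ∀ a b, I a b → I b a)
    (w : GTrace A I) (h1 : IsIRR A I w) (h2 : CycReduced A I w) (n : ℕ) :
    IsIRR A I (w ^ n) := by
  obtain ⟨x, rfl⟩ : ∃ x, trc (A ⊕ A) (extI A I) x = w := Con.mk'_surjective w
  have hpow : IsTraceReduced A I (x ^ n) :=
    (isTraceReduced_of_isIRR h1).pow (depSubword_wrap_of_cycReduced h2) n
  rintro ⟨u, v, c, h⟩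
  obtain ⟨u, rfl⟩ : ∃ u', trc (A ⊕ A) (extI A I) u' = u := Con.mk'_surjective u
  obtain ⟨v, rfl⟩ : ∃ v', trc (A ⊕ A) (extI A I) v' = v := Con.mk'_surjective v
  rw [← trc_pow, ← trc_mul, ← trc_mul] at h
  exact not_isTraceReduced_of_cancel_factor hirr u v c (hpow.of_traceCon hsym ((Con.eq _).1 h))

/-- Powers of a cyclically reduced irreducible trace are irreducible. -/
theorem cyclically_reduced_power_irreducible (A : Type) [Fintype A]
    (I : A → A → Prop) (hirr : ∀ a, ¬ I a a) (hsym : ∀ a b, I a b → I b a)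
    (w : GTrace A I) (h1 : IsIRR A I w) (h2 : CycReduced A I w) (n : ℕ) :
    IsIRR A I (w ^ n) :=
  cyclically_reduced_power_irreducible_general A I hirr hsym w h1 h2 n
end

section
/- For the additive group ℤ, if the equation x₁·g₁ + x₂·g₂ + ... + x_k·g_k = g (with g₁,...,g_k, g ∈ ℤ) has a solution (x₁,...,x_k) ∈ ℕ^k, then it has a solution with x_i ≤ k·(max{|g₁|,...,|g_k|,|g|})³ for all i. -/
/-!
Take a solution `x` with `∑ xᵢ` minimal. Then no nonzero `z ≤ x` has `∑ zᵢ gᵢ = 0`, since `x - z`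
would be a smaller solution. Let `B` bound all `|gᵢ|` and `|g|`, and suppose `xᵢ > k B³` with
`gᵢ > 0` (the case `gᵢ < 0` follows by negating all the `gₜ` and `g`, and `gᵢ = 0` forces `xᵢ = 0`).
Since `∑ xₜ gₜ = g ≤ B`, the large positive term `xᵢ gᵢ` must be cancelled, and this forces some
`xⱼ ≥ B` with `gⱼ < 0`. Then `z = |gⱼ| eᵢ + gᵢ eⱼ` is a nonzero vector below `x` with
`∑ zₜ gₜ = 0`, a contradiction.
-/

open Finset

variable {ι : Type*} [Fintype ι] {g : ι → ℤ} {x : ι → ℕ} {B : ℕ}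

def ZeroSumFreeBelow (g : ι → ℤ) (x : ι → ℕ) : Prop :=
  ∀ z ≤ x, ∑ t, (z t : ℤ) * g t = 0 → z = 0

theorem zeroSumFreeBelow_neg_iff :
    ZeroSumFreeBelow (-g) x ↔ ZeroSumFreeBelow g x := by
  simp only [ZeroSumFreeBelow, Pi.neg_apply, mul_neg, sum_neg_distrib, neg_eq_zero]

theorem exists_zeroSumFreeBelow_solution {g₀ : ℤ}
    (h : ∃ x : ι → ℕ, ∑ t, (x t : ℤ) * g t = g₀) :
    ∃ x : ι → ℕ, ∑ t, (x t : ℤ) * g t = g₀ ∧ ZeroSumFreeBelow g x := by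
  set S := {x : ι → ℕ | ∑ t, (x t : ℤ) * g t = g₀}
  set x := Function.argminOn (fun x : ι → ℕ => ∑ t, x t) S h
  have hx : x ∈ S := Function.argminOn_mem _ S h
  refine ⟨x, hx, fun z hzx hz => ?_⟩
  by_contra hz0
  have hsub : ∑ t, ((x - z) t : ℤ) * g t = g₀ := by
    simp only [Pi.sub_apply, Nat.cast_sub (hzx _), sub_mul, sum_sub_distrib, hz, sub_zero]
    exact hx
  have hzpos : 0 < ∑ t, z t := by
    obtain ⟨t, ht⟩ := Function.ne_iff.mp hz0
    exact (Nat.pos_of_ne_zero ht).trans_le (single_le_sum (by simp) (mem_univ t))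
  have hlt : ∑ t, (x - z) t < ∑ t, x t := by
    have hsplit : ∑ t, (x - z) t + ∑ t, z t = ∑ t, x t := by
      rw [← sum_add_distrib]
      exact sum_congr rfl fun t _ => tsub_add_cancel_of_le (hzx t)
    omega
  exact Function.not_lt_argminOn _ S hsub hlt

theorem exists_neg_coeff_le_of_lt [DecidableEq ι]
    (hB : ∀ t, (g t).natAbs ≤ B) (hB₀ : (∑ t, (x t : ℤ) * g t).natAbs ≤ B) {i : ι}
    (hi : 0 < g i) (hxi : Fintype.card ι * B ^ 3 < x i) : ∃ j, g j < 0 ∧ B ≤ x j := by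
  by_contra! h
  set k := Fintype.card ι
  have hgB : ∀ t, -(B : ℤ) ≤ g t ∧ g t ≤ B := fun t =>
    abs_le.mp (by rw [← Int.natCast_natAbs]; exact_mod_cast hB t)
  have hB1 : (1 : ℤ) ≤ B := (hgB i).2.trans' hi
  have hk : (1 : ℤ) ≤ k := by exact_mod_cast Fintype.card_pos_iff.mpr ⟨i⟩
  -- a term with `g t < 0` has `x t < B`, so is at least `-(B - 1) B`
  have hterm : ∀ t ∈ univ.erase i, -(((B : ℤ) - 1) * B) ≤ x t * g t := fun t _ => by
    have hxt : (0 : ℤ) ≤ x t := by positivity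
    rcases lt_or_ge (g t) 0 with hneg | hnonneg
    · have : (x t : ℤ) ≤ B - 1 := by have := h t hneg; omega
      nlinarith [(hgB t).1]
    · nlinarith
  have hrest : -(k * (((B : ℤ) - 1) * B)) ≤ ∑ t ∈ univ.erase i, (x t : ℤ) * g t := by
    have hcard : ((univ.erase i).card : ℤ) ≤ k := by exact_mod_cast card_le_univ _
    have := card_nsmul_le_sum _ _ _ hterm
    rw [nsmul_eq_mul] at this
    nlinarith [mul_le_mul_of_nonneg_right hcard (show (0 : ℤ) ≤ (B - 1) * B by nlinarith)]
  have hsum : ∑ t, (x t : ℤ) * g t ≤ B := Int.le_natAbs.trans (by exact_mod_cast hB₀)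
  rw [← add_sum_erase _ _ (mem_univ i)] at hsum
  have hxi' : (k : ℤ) * B ^ 3 < x i := by exact_mod_cast hxi
  have hxgi : (x i : ℤ) ≤ x i * g i := le_mul_of_one_le_right (by positivity) hi
  -- hence `B ≥ xᵢ gᵢ - k (B - 1) B > k B³ - k (B - 1) B ≥ B`
  have hcubic : (B : ℤ) ≤ k * ((B : ℤ) ^ 3 - (B - 1) * B) := by
    nlinarith [mul_le_mul_of_nonneg_right hk (show (0 : ℤ) ≤ B ^ 2 * (B - 1) + B by nlinarith)]
  nlinarith

namespace ZeroSumFreeBelow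

variable [DecidableEq ι]

theorem apply_eq_zero_of_coeff_eq_zero (hx : ZeroSumFreeBelow g x) {i : ι} (hi : g i = 0) :
    x i = 0 := by
  have hle : Pi.single i (x i) ≤ x := fun t => by
    rcases eq_or_ne t i with rfl | ht <;> simp [*]
  simpa using congrFun (hx _ hle (by simp [Pi.single_apply, hi])) i

theorem lt_natAbs_or_lt (hx : ZeroSumFreeBelow g x) {i j : ι}
    (hi : 0 < g i) (hj : g j < 0) : x i < (g j).natAbs ∨ x j < (g i).natAbs := by
  have hij : i ≠ j := by rintro rfl; omega
  by_contra! h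
  set z : ι → ℕ := Pi.single i (g j).natAbs + Pi.single j (g i).natAbs
  have hle : z ≤ x := fun t => by
    rcases eq_or_ne t i with rfl | hti
    · simpa [z, hij] using h.1
    rcases eq_or_ne t j with rfl | htj
    · simpa [z, hij.symm] using h.2
    simp [z, hti, htj]
  have hzero : ∑ t, (z t : ℤ) * g t = 0 := by
    simp only [z, Pi.add_apply, Nat.cast_add, add_mul, sum_add_distrib, Pi.single_apply]
    simp [abs_of_pos hi, abs_of_neg hj]
    ring
  have hzi := congrFun (hx z hle hzero) i
  simp [z, hij] at hzi
  omega

theorem apply_le_of_coeff_pos (hx : ZeroSumFreeBelow g x) (hB : ∀ t, (g t).natAbs ≤ B)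
    (hB₀ : (∑ t, (x t : ℤ) * g t).natAbs ≤ B) {i : ι} (hi : 0 < g i) :
    x i ≤ Fintype.card ι * B ^ 3 := by
  by_contra! hxi
  obtain ⟨j, hj, hBj⟩ := exists_neg_coeff_le_of_lt hB hB₀ hi hxi
  have hBi : B ≤ x i := calc
    B ≤ B ^ 3 := Nat.le_self_pow three_ne_zero B
    _ ≤ Fintype.card ι * B ^ 3 := Nat.le_mul_of_pos_left _ (Fintype.card_pos_iff.mpr ⟨i⟩)
    _ ≤ x i := hxi.le
  have := hB i
  have := hB j
  rcases hx.lt_natAbs_or_lt hi hj with h | h <;> omega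

theorem apply_le (hx : ZeroSumFreeBelow g x) (hB : ∀ t, (g t).natAbs ≤ B)
    (hB₀ : (∑ t, (x t : ℤ) * g t).natAbs ≤ B) (i : ι) : x i ≤ Fintype.card ι * B ^ 3 := by
  rcases lt_trichotomy (g i) 0 with hi | hi | hi
  · have hB' : ∀ t, ((-g) t).natAbs ≤ B := by simpa using hB
    have hB₀' : (∑ t, (x t : ℤ) * (-g) t).natAbs ≤ B := by simpa using hB₀
    exact (zeroSumFreeBelow_neg_iff.mpr hx).apply_le_of_coeff_pos hB' hB₀' (neg_pos.mpr hi)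
  · simp [hx.apply_eq_zero_of_coeff_eq_zero hi]
  · exact hx.apply_le_of_coeff_pos hB hB₀ hi

end ZeroSumFreeBelow

/-- If a knapsack instance over ℤ has a solution in ℕ^k, then it has one with
all entries bounded by k·(max of the absolute values of the inputs)³. -/
theorem integer_knapsack_small_solution (k : ℕ) (g : Fin k → ℤ) (g₀ : ℤ)
    (h : ∃ x : Fin k → ℕ, ∑ i, (x i : ℤ) * g i = g₀) :
    ∃ x : Fin k → ℕ, (∑ i, (x i : ℤ) * g i = g₀) ∧
      ∀ i, x i ≤ k * ((Finset.univ.sup fun j => (g j).natAbs) ⊔ g₀.natAbs) ^ 3 := by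
  obtain ⟨x, hx, hfree⟩ := exists_zeroSumFreeBelow_solution h
  have hg : ∀ t, (g t).natAbs ≤ (univ.sup fun j => (g j).natAbs) ⊔ g₀.natAbs := fun t =>
    (le_sup (f := fun j => (g j).natAbs) (mem_univ t)).trans le_sup_left
  have hg₀ : (∑ t, (x t : ℤ) * g t).natAbs ≤ (univ.sup fun j => (g j).natAbs) ⊔ g₀.natAbs :=
    hx ▸ le_sup_right
  exact ⟨x, hx, fun i => by simpa using hfree.apply_le hg hg₀ i⟩
end
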